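/- arXiv:2509.07861 — 4 statements merged into one kernel-verified Lean document; each statement's English description precedes it below -/
import Mathlib

section
/- Let G and H be groups, d ≥ 2 an integer, and C_1, C_2 ≥ 0 real numbers. Suppose φ_1 : G → ℂ admits an M_d-decomposition of bound at most C_1 and φ_2 : H → ℂ admits an M_d-decomposition of bound at most C_2. Define φ : G × H → ℂ by φ(x, y) = φ_1(x)·φ_2(y). Then φ admits an M_d-decomposition (with respect to the direct product group G × H) of bound at most C_1 · C_2. -/
open scoped ENNReal NNReal

noncomputable section

/-- Apply a chain of maps `ξ i : H (i+1) → H i` to a vector of `H n`, landing in `H 0`. -/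
def chainApply {H : ℕ → Type} (ξ : ∀ i, H (i + 1) → H i) : ∀ n, H n → H 0
  | 0, v => v
  | n + 1, v => chainApply ξ n (ξ n v)

/-- `φ : G → ℂ` admits an `M_d`-decomposition of bound at most `C`: there are complex
Hilbert spaces `H 0, …, H d` with `H 0 ≅ ℂ ≅ H d` and bounded-operator-valued maps
`ξ i : G → B(H (i+1), H i)` (for `i = 0, …, d-1`) with finite sup-norm bounds `M i`,
such that `φ (t 0 * ⋯ * t (d-1)) = ξ 0 (t 0) (ξ 1 (t 1) (⋯ (ξ (d-1) (t (d-1)) 1) ⋯))`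
and `M 0 * ⋯ * M (d-1) ≤ C`. -/
def HasMdDecomp (G : Type*) [Group G] (d : ℕ) (φ : G → ℂ) (C : ℝ) : Prop :=
  ∃ (H : ℕ → Type) (_ : ∀ i, NormedAddCommGroup (H i))
    (_ : ∀ i, InnerProductSpace ℂ (H i)) (_ : ∀ i, CompleteSpace (H i))
    (e₀ : ℂ ≃ₗᵢ[ℂ] H 0) (ed : ℂ ≃ₗᵢ[ℂ] H d)
    (ξ : ∀ i, G → (H (i + 1) →L[ℂ] H i)) (M : ℕ → ℝ),
    (∀ i, i < d → ∀ t : G, ‖ξ i t‖ ≤ M i) ∧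
    (∀ t : ℕ → G,
      φ (((List.range d).map t).prod) =
        e₀.symm (chainApply (fun i => ⇑(ξ i (t i))) d (ed 1))) ∧
    (∏ i ∈ Finset.range d, M i) ≤ C

/-! ### Auxiliary development: concrete ℓ²-tensor products -/

abbrev l2 (α : Type) : Type := lp (fun _ : α => ℂ) 2

namespace Md
variable {α β γ α' β' : Type}

def en (f : α → ℂ) : ℝ≥0∞ := ∑' a, (‖f a‖₊ : ℝ≥0∞) ^ 2

lemma summable_iff_en {f : α → ℂ} :
    (Summable fun a => ‖f a‖ ^ ((2:ℝ≥0∞)).toReal) ↔ en f ≠ ∞ := by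
  have h2 : ((2:ℝ≥0∞)).toReal = (2:ℝ) := by norm_num
  rw [h2]
  have : (fun a => ‖f a‖ ^ (2:ℝ)) = fun a => ((‖f a‖₊ ^ 2 : ℝ≥0) : ℝ) := by
    funext a
    rw [Real.rpow_two]
    push_cast
    simp [coe_nnnorm]
  rw [this, NNReal.summable_coe, ← ENNReal.tsum_coe_ne_top_iff_summable, en]
  push_cast
  rfl

lemma memℓp_two_iff {f : α → ℂ} : Memℓp f 2 ↔ en f ≠ ∞ := by
  rw [memℓp_gen_iff (by norm_num), summable_iff_en]

lemma l2_nnnorm_sq (f : l2 α) : (‖f‖₊ : ℝ≥0∞) ^ 2 = en ⇑f := by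
  have hs := (memℓp_two_iff.mp (lp.memℓp f))
  have h1 := lp.norm_rpow_eq_tsum (p := 2) (by norm_num) f
  have h2 : ((2:ℝ≥0∞)).toReal = (2:ℝ) := by norm_num
  rw [h2] at h1
  have hsum : Summable fun a => ‖f a‖ ^ (2:ℝ) := by
    rw [← h2, summable_iff_en]; exact hs
  have key : ENNReal.ofReal (‖f‖ ^ (2:ℝ)) = ∑' a, ENNReal.ofReal (‖f a‖ ^ (2:ℝ)) := by
    rw [h1]
    exact ENNReal.ofReal_tsum_of_nonneg (fun a => Real.rpow_nonneg (norm_nonneg _) _) hsum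
  have conv : ∀ (x : ℂ), ENNReal.ofReal (‖x‖ ^ (2:ℝ)) = (‖x‖₊ : ℝ≥0∞) ^ 2 := by
    intro x
    rw [Real.rpow_two, ENNReal.ofReal_pow (norm_nonneg _), ofReal_norm, enorm_eq_nnnorm]
  have conv' : ENNReal.ofReal (‖f‖ ^ (2:ℝ)) = (‖f‖₊ : ℝ≥0∞) ^ 2 := by
    rw [Real.rpow_two, ENNReal.ofReal_pow (norm_nonneg _), ofReal_norm, enorm_eq_nnnorm]
  rw [← conv', key, en]
  exact tsum_congr fun a => conv _

lemma en_fin (f : l2 α) : en ⇑f ≠ ∞ := memℓp_two_iff.mp (lp.memℓp f)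

lemma sq_le_of_en {x y : ℝ≥0} (h : (x : ℝ≥0∞) ^ 2 ≤ (y : ℝ≥0∞) ^ 2) : x ≤ y := by
  have h' : x ^ 2 ≤ y ^ 2 := by exact_mod_cast h
  calc x = NNReal.sqrt (x ^ 2) := (NNReal.sqrt_sq x).symm
    _ ≤ NNReal.sqrt (y ^ 2) := NNReal.sqrt_le_sqrt.mpr h'
    _ = y := NNReal.sqrt_sq y

lemma eq_of_sq_en {x y : ℝ≥0} (h : (x : ℝ≥0∞) ^ 2 = (y : ℝ≥0∞) ^ 2) : x = y :=
  le_antisymm (sq_le_of_en h.le) (sq_le_of_en h.ge)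

lemma en_tvec (v : l2 α) (w : l2 β) :
    en (fun p : α × β => v p.1 * w p.2) = en ⇑v * en ⇑w := by
  rw [en, ENNReal.tsum_prod']
  have : ∀ a : α, (∑' b, (‖v a * w b‖₊ : ℝ≥0∞) ^ 2)
      = (‖v a‖₊ : ℝ≥0∞)^2 * en ⇑w := by
    intro a
    rw [en, ← ENNReal.tsum_mul_left]
    apply tsum_congr; intro b
    rw [nnnorm_mul]; push_cast; ring
  simp_rw [this]
  rw [ENNReal.tsum_mul_right]; rfl

/-- the tensor product of two ℓ²-vectors -/
def tvec (v : l2 α) (w : l2 β) : l2 (α × β) :=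
  ⟨fun p => v p.1 * w p.2, memℓp_two_iff.mpr
    (by rw [en_tvec]; exact ENNReal.mul_ne_top (en_fin v) (en_fin w))⟩

@[simp] lemma tvec_apply (v : l2 α) (w : l2 β) (p : α × β) : tvec v w p = v p.1 * w p.2 := rfl

lemma nnnorm_tvec (v : l2 α) (w : l2 β) : ‖tvec v w‖₊ = ‖v‖₊ * ‖w‖₊ := by
  apply eq_of_sq_en
  push_cast
  rw [mul_pow, l2_nnnorm_sq, l2_nnnorm_sq, l2_nnnorm_sq, ← en_tvec v w]
  rfl

lemma norm_tvec (v : l2 α) (w : l2 β) : ‖tvec v w‖ = ‖v‖ * ‖w‖ := by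
  have := congrArg (NNReal.toReal) (nnnorm_tvec v w)
  push_cast at this
  simpa [coe_nnnorm] using this

lemma tvec_smul_left (c : ℂ) (v : l2 α) (w : l2 β) : tvec (c • v) w = c • tvec v w := by
  apply lp.ext; funext p
  simp only [tvec_apply, lp.coeFn_smul, Pi.smul_apply, smul_eq_mul]
  ring

lemma tvec_smul_right (c : ℂ) (v : l2 α) (w : l2 β) : tvec v (c • w) = c • tvec v w := by
  apply lp.ext; funext p
  simp only [tvec_apply, lp.coeFn_smul, Pi.smul_apply, smul_eq_mul]
  ring

/-! ### operator acting in the second coordinate -/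

lemma en_sect_le (u : γ × α → ℂ) (c : γ) : en (fun a => u (c, a)) ≤ en u :=
  ENNReal.tsum_comp_le_tsum_of_injective
    (f := fun a : α => ((c, a) : γ × α)) (fun a a' h => by simpa using h) _

def sect (u : l2 (γ × α)) (c : γ) : l2 α :=
  ⟨fun a => u (c, a), memℓp_two_iff.mpr
    (fun h => en_fin u (top_le_iff.mp (h ▸ en_sect_le ⇑u c)))⟩

@[simp] lemma sect_apply (u : l2 (γ × α)) (c : γ) (a : α) : sect u c a = u (c, a) := rfl

lemma en_eq_tsum_sect (u : γ × α → ℂ) : en u = ∑' c, en (fun a => u (c, a)) :=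
  ENNReal.tsum_prod'

lemma sect_add (u v : l2 (γ × α)) (c : γ) : sect (u + v) c = sect u c + sect v c := by
  apply lp.ext; funext a
  simp [sect_apply, lp.coeFn_add]

lemma sect_smul (r : ℂ) (u : l2 (γ × α)) (c : γ) : sect (r • u) c = r • sect u c := by
  apply lp.ext; funext a
  simp [sect_apply, lp.coeFn_smul]

lemma sect_tvec (v : l2 γ) (w : l2 α) (c : γ) : sect (tvec v w) c = v c • w := by
  apply lp.ext; funext a
  simp [lp.coeFn_smul]

variable (T : l2 α →L[ℂ] l2 β)

def sopFun (u : l2 (γ × α)) : γ × β → ℂ := fun p => T (sect u p.1) p.2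

lemma en_sopFun_le (u : l2 (γ × α)) : en (sopFun T u) ≤ (‖T‖₊ : ℝ≥0∞) ^ 2 * en ⇑u := by
  rw [en_eq_tsum_sect (sopFun T u)]
  have : ∀ c : γ, en (fun b => T (sect u c) b) ≤ (‖T‖₊ : ℝ≥0∞)^2 * en ⇑(sect u c) := by
    intro c
    rw [← l2_nnnorm_sq, ← l2_nnnorm_sq, ← mul_pow, ← ENNReal.coe_mul]
    exact pow_le_pow_left' (ENNReal.coe_le_coe.mpr (T.le_opNNNorm _)) 2
  calc ∑' c, en (fun b => T (sect u c) b) ≤ ∑' c, (‖T‖₊ : ℝ≥0∞)^2 * en ⇑(sect u c) :=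
        ENNReal.tsum_le_tsum this
    _ = (‖T‖₊ : ℝ≥0∞)^2 * ∑' c, en ⇑(sect u c) := ENNReal.tsum_mul_left
    _ = (‖T‖₊ : ℝ≥0∞)^2 * en ⇑u :=
        congrArg (fun z => (‖T‖₊ : ℝ≥0∞)^2 * z) (en_eq_tsum_sect ⇑u).symm

def sopL2 (u : l2 (γ × α)) : l2 (γ × β) :=
  ⟨sopFun T u, memℓp_two_iff.mpr
    (fun h => ENNReal.mul_ne_top (by simp) (en_fin u)
      (top_le_iff.mp (h ▸ en_sopFun_le T u)))⟩

@[simp] lemma sopL2_apply (u : l2 (γ × α)) (p : γ × β) : sopL2 T u p = T (sect u p.1) p.2 := rfl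

lemma nnnorm_sopL2_le (u : l2 (γ × α)) : ‖sopL2 T u‖₊ ≤ ‖T‖₊ * ‖u‖₊ := by
  apply sq_le_of_en
  rw [l2_nnnorm_sq]
  push_cast
  rw [mul_pow]
  calc en ⇑(sopL2 T u) = en (sopFun T u) := rfl
    _ ≤ (‖T‖₊ : ℝ≥0∞)^2 * en ⇑u := en_sopFun_le T u
    _ = (‖T‖₊ : ℝ≥0∞)^2 * (‖u‖₊ : ℝ≥0∞)^2 := by rw [l2_nnnorm_sq]

def secondOp (γ : Type) : l2 (γ × α) →L[ℂ] l2 (γ × β) :=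
  LinearMap.mkContinuous
    { toFun := sopL2 T
      map_add' := fun u v => by
        apply lp.ext; funext p
        simp [sect_add, lp.coeFn_add]
      map_smul' := fun r u => by
        apply lp.ext; funext p
        simp [sect_smul, lp.coeFn_smul] }
    ‖T‖
    (fun u => by
      have := nnnorm_sopL2_le T u
      have h' : (‖sopL2 T u‖₊ : ℝ) ≤ (‖T‖₊ * ‖u‖₊ : ℝ≥0) := by exact_mod_cast this
      simpa [coe_nnnorm] using h')

lemma norm_secondOp_le : ‖secondOp T γ‖ ≤ ‖T‖ :=
  LinearMap.mkContinuous_norm_le _ (norm_nonneg T) _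

lemma secondOp_tvec (v : l2 γ) (w : l2 α) : secondOp T γ (tvec v w) = tvec v (T w) := by
  apply lp.ext; funext p
  show sopL2 T (tvec v w) p = _
  rw [sopL2_apply, sect_tvec, map_smul]
  simp [lp.coeFn_smul]

/-! ### operator acting in the first coordinate -/

lemma en_sect'_le (u : α × γ → ℂ) (c : γ) : en (fun a => u (a, c)) ≤ en u :=
  ENNReal.tsum_comp_le_tsum_of_injective
    (f := fun a : α => ((a, c) : α × γ)) (fun a a' h => by simpa using h) _

def sect' (u : l2 (α × γ)) (c : γ) : l2 α :=
  ⟨fun a => u (a, c), memℓp_two_iff.mpr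
    (fun h => en_fin u (top_le_iff.mp (h ▸ en_sect'_le ⇑u c)))⟩

@[simp] lemma sect'_apply (u : l2 (α × γ)) (c : γ) (a : α) : sect' u c a = u (a, c) := rfl

lemma en_eq_tsum_sect' (u : α × γ → ℂ) : en u = ∑' c, en (fun a => u (a, c)) := by
  rw [en, ENNReal.tsum_prod']
  exact ENNReal.tsum_comm

lemma sect'_add (u v : l2 (α × γ)) (c : γ) : sect' (u + v) c = sect' u c + sect' v c := by
  apply lp.ext; funext a
  simp [sect'_apply, lp.coeFn_add]

lemma sect'_smul (r : ℂ) (u : l2 (α × γ)) (c : γ) : sect' (r • u) c = r • sect' u c := by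
  apply lp.ext; funext a
  simp [sect'_apply, lp.coeFn_smul]

lemma sect'_tvec (v : l2 α) (w : l2 γ) (c : γ) : sect' (tvec v w) c = w c • v := by
  apply lp.ext; funext a
  simp [lp.coeFn_smul, mul_comm]

def fopFun (u : l2 (α × γ)) : β × γ → ℂ := fun p => T (sect' u p.2) p.1

lemma en_fopFun_le (u : l2 (α × γ)) : en (fopFun T u) ≤ (‖T‖₊ : ℝ≥0∞) ^ 2 * en ⇑u := by
  rw [en_eq_tsum_sect' (fopFun T u)]
  have : ∀ c : γ, en (fun b => T (sect' u c) b) ≤ (‖T‖₊ : ℝ≥0∞)^2 * en ⇑(sect' u c) := by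
    intro c
    rw [← l2_nnnorm_sq, ← l2_nnnorm_sq, ← mul_pow, ← ENNReal.coe_mul]
    exact pow_le_pow_left' (ENNReal.coe_le_coe.mpr (T.le_opNNNorm _)) 2
  calc ∑' c, en (fun b => T (sect' u c) b) ≤ ∑' c, (‖T‖₊ : ℝ≥0∞)^2 * en ⇑(sect' u c) :=
        ENNReal.tsum_le_tsum this
    _ = (‖T‖₊ : ℝ≥0∞)^2 * ∑' c, en ⇑(sect' u c) := ENNReal.tsum_mul_left
    _ = (‖T‖₊ : ℝ≥0∞)^2 * en ⇑u :=
        congrArg (fun z => (‖T‖₊ : ℝ≥0∞)^2 * z) (en_eq_tsum_sect' ⇑u).symm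

def fopL2 (u : l2 (α × γ)) : l2 (β × γ) :=
  ⟨fopFun T u, memℓp_two_iff.mpr
    (fun h => ENNReal.mul_ne_top (by simp) (en_fin u)
      (top_le_iff.mp (h ▸ en_fopFun_le T u)))⟩

@[simp] lemma fopL2_apply (u : l2 (α × γ)) (p : β × γ) : fopL2 T u p = T (sect' u p.2) p.1 := rfl

lemma nnnorm_fopL2_le (u : l2 (α × γ)) : ‖fopL2 T u‖₊ ≤ ‖T‖₊ * ‖u‖₊ := by
  apply sq_le_of_en
  rw [l2_nnnorm_sq]
  push_cast
  rw [mul_pow]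
  calc en ⇑(fopL2 T u) = en (fopFun T u) := rfl
    _ ≤ (‖T‖₊ : ℝ≥0∞)^2 * en ⇑u := en_fopFun_le T u
    _ = (‖T‖₊ : ℝ≥0∞)^2 * (‖u‖₊ : ℝ≥0∞)^2 := by rw [l2_nnnorm_sq]

def firstOp (γ : Type) : l2 (α × γ) →L[ℂ] l2 (β × γ) :=
  LinearMap.mkContinuous
    { toFun := fopL2 T
      map_add' := fun u v => by
        apply lp.ext; funext p
        simp [sect'_add, lp.coeFn_add]
      map_smul' := fun r u => by
        apply lp.ext; funext p
        simp [sect'_smul, lp.coeFn_smul] }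
    ‖T‖
    (fun u => by
      have := nnnorm_fopL2_le T u
      have h' : (‖fopL2 T u‖₊ : ℝ) ≤ (‖T‖₊ * ‖u‖₊ : ℝ≥0) := by exact_mod_cast this
      simpa [coe_nnnorm] using h')

lemma norm_firstOp_le : ‖firstOp T γ‖ ≤ ‖T‖ :=
  LinearMap.mkContinuous_norm_le _ (norm_nonneg T) _

lemma firstOp_tvec (v : l2 α) (w : l2 γ) : firstOp T γ (tvec v w) = tvec (T v) w := by
  apply lp.ext; funext p
  show fopL2 T (tvec v w) p = _
  rw [fopL2_apply, sect'_tvec, map_smul]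
  simp [lp.coeFn_smul, mul_comm]

/-! ### tensor product of operators -/

def tensorOp (S : l2 α →L[ℂ] l2 α') (T : l2 β →L[ℂ] l2 β') :
    l2 (α × β) →L[ℂ] l2 (α' × β') :=
  (firstOp S β').comp (secondOp T α)

lemma norm_tensorOp_le (S : l2 α →L[ℂ] l2 α') (T : l2 β →L[ℂ] l2 β') :
    ‖tensorOp S T‖ ≤ ‖S‖ * ‖T‖ :=
  le_trans (ContinuousLinearMap.opNorm_comp_le _ _)
    (mul_le_mul (norm_firstOp_le S) (norm_secondOp_le T) (norm_nonneg _) (norm_nonneg _))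

lemma tensorOp_tvec (S : l2 α →L[ℂ] l2 α') (T : l2 β →L[ℂ] l2 β') (v : l2 α) (w : l2 β) :
    tensorOp S T (tvec v w) = tvec (S v) (T w) := by
  rw [tensorOp, ContinuousLinearMap.comp_apply, secondOp_tvec, firstOp_tvec]

/-! ### one-dimensional ℓ² spaces -/

lemma l2_eq_of_default [Unique γ] {u v : l2 γ} (h : u default = v default) : u = v :=
  lp.ext (funext fun a => by rwa [Unique.eq_default a])

def unitIsom [Unique γ] (z : l2 γ) (hz : ‖z‖ = 1) : ℂ →ₗᵢ[ℂ] l2 γ :=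
  { toLinearMap := LinearMap.toSpanSingleton ℂ _ z
    norm_map' := fun c => by
      simp [LinearMap.toSpanSingleton_apply, norm_smul, hz] }

def unitEquiv [Unique γ] (z : l2 γ) (hz : ‖z‖ = 1) : ℂ ≃ₗᵢ[ℂ] l2 γ :=
  LinearIsometryEquiv.ofSurjective (unitIsom z hz) (by
    intro u
    have hz0 : z default ≠ 0 := by
      intro h
      have : z = (0 : l2 γ) := l2_eq_of_default (by simp [h, lp.coeFn_zero])
      rw [this] at hz; simp at hz
    refine ⟨u default / z default, ?_⟩
    apply l2_eq_of_default
    show ((u default / z default) • z) default = u default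
    rw [lp.coeFn_smul, Pi.smul_apply, smul_eq_mul, div_mul_cancel₀ _ hz0])

@[simp] lemma unitEquiv_apply [Unique γ] (z : l2 γ) (hz : ‖z‖ = 1) (c : ℂ) :
    unitEquiv z hz c = c • z := by
  show (LinearIsometryEquiv.ofSurjective (unitIsom z hz) _) c = c • z
  rfl

/-! ### choice of Hilbert bases -/

def hIdx (E : Type) [NormedAddCommGroup E] [InnerProductSpace ℂ E] [CompleteSpace E] : Type :=
  (exists_hilbertBasis ℂ E).choose

def hRepr (E : Type) [NormedAddCommGroup E] [InnerProductSpace ℂ E] [CompleteSpace E] :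
    E ≃ₗᵢ[ℂ] l2 (hIdx E) :=
  (exists_hilbertBasis ℂ E).choose_spec.choose.repr

def oneVec : l2 PUnit :=
  ⟨fun _ => 1, memℓp_gen (Summable.of_finite)⟩

lemma norm_oneVec : ‖oneVec‖ = 1 := by
  have h : (‖oneVec‖₊ : ℝ≥0∞) ^ 2 = ((1 : ℝ≥0) : ℝ≥0∞) ^ 2 := by
    rw [l2_nnnorm_sq, en]
    rw [tsum_eq_single PUnit.unit (fun b hb => absurd (Subsingleton.elim b PUnit.unit) hb)]
    show (‖(1:ℂ)‖₊ : ℝ≥0∞) ^ 2 = ((1:ℝ≥0) : ℝ≥0∞) ^ 2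
    simp
  have := eq_of_sq_en h
  have := congrArg NNReal.toReal this
  simpa [coe_nnnorm] using this

def cOne : ℂ ≃ₗᵢ[ℂ] l2 PUnit := unitEquiv oneVec norm_oneVec

/-! ### transported decomposition data -/

section Main
variable (d : ℕ) (H₁ : ℕ → Type) [∀ i, NormedAddCommGroup (H₁ i)]
  [∀ i, InnerProductSpace ℂ (H₁ i)] [∀ i, CompleteSpace (H₁ i)]

def idx (j : ℕ) : Type := if 0 < j ∧ j < d then hIdx (H₁ j) else PUnit

lemma idx_zero : idx d H₁ 0 = PUnit := if_neg (by simp)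

lemma idx_d : idx d H₁ d = PUnit := if_neg (by simp)

def uidxZero : Unique (idx d H₁ 0) := by rw [idx_zero]; infer_instance

def uidxD : Unique (idx d H₁ d) := by rw [idx_d]; infer_instance

variable (e01 : ℂ ≃ₗᵢ[ℂ] H₁ 0) (ed1 : ℂ ≃ₗᵢ[ℂ] H₁ d)

def R (j : ℕ) (_ : j ≤ d) : H₁ j ≃ₗᵢ[ℂ] l2 (idx d H₁ j) := by
  by_cases hm : 0 < j ∧ j < d
  · rw [show idx d H₁ j = hIdx (H₁ j) from if_pos hm]
    exact hRepr (H₁ j)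
  · by_cases hz : j = 0
    · subst hz
      rw [idx_zero]
      exact e01.symm.trans cOne
    · have hjd : j = d := by omega
      subst hjd
      rw [idx_d]
      exact ed1.symm.trans cOne

variable {G : Type*} [Group G] (ξ₁ : ∀ i, G → (H₁ (i+1) →L[ℂ] H₁ i))

def Aop (j : ℕ) (x : G) : l2 (idx d H₁ (j+1)) →L[ℂ] l2 (idx d H₁ j) :=
  if h : j + 1 ≤ d then
    ((R d H₁ e01 ed1 j (Nat.le_of_succ_le h)).toLinearIsometry.toContinuousLinearMap).comp
      ((ξ₁ j x).comp
        ((R d H₁ e01 ed1 (j+1) h).symm.toLinearIsometry.toContinuousLinearMap))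
  else 0

lemma Aop_norm_le (j : ℕ) (x : G) : ‖Aop d H₁ e01 ed1 ξ₁ j x‖ ≤ ‖ξ₁ j x‖ := by
  rw [Aop]
  split
  · refine le_trans (ContinuousLinearMap.opNorm_comp_le _ _) ?_
    refine le_trans (mul_le_mul (LinearIsometry.norm_toContinuousLinearMap_le _)
      (ContinuousLinearMap.opNorm_comp_le _ _) (norm_nonneg _) zero_le_one) ?_
    rw [one_mul]
    refine le_trans (mul_le_mul_of_nonneg_left
      (LinearIsometry.norm_toContinuousLinearMap_le _) (norm_nonneg _)) ?_
    rw [mul_one]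
  · simpa using norm_nonneg _

lemma Aop_apply (j : ℕ) (h : j + 1 ≤ d) (x : G) (v : H₁ (j+1)) :
    Aop d H₁ e01 ed1 ξ₁ j x (R d H₁ e01 ed1 (j+1) h v)
      = R d H₁ e01 ed1 j (Nat.le_of_succ_le h) (ξ₁ j x v) := by
  rw [Aop, dif_pos h]
  simp

end Main

section Chain
variable (d : ℕ) (H₁ H₂ : ℕ → Type)
  [∀ i, NormedAddCommGroup (H₁ i)] [∀ i, InnerProductSpace ℂ (H₁ i)] [∀ i, CompleteSpace (H₁ i)]
  [∀ i, NormedAddCommGroup (H₂ i)] [∀ i, InnerProductSpace ℂ (H₂ i)] [∀ i, CompleteSpace (H₂ i)]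
  (e01 : ℂ ≃ₗᵢ[ℂ] H₁ 0) (ed1 : ℂ ≃ₗᵢ[ℂ] H₁ d)
  (e02 : ℂ ≃ₗᵢ[ℂ] H₂ 0) (ed2 : ℂ ≃ₗᵢ[ℂ] H₂ d)
  {G H : Type*} [Group G] [Group H]
  (ξ₁ : ∀ i, G → (H₁ (i+1) →L[ℂ] H₁ i)) (ξ₂ : ∀ i, H → (H₂ (i+1) →L[ℂ] H₂ i))

lemma chain_eq (t : ℕ → G × H) :
    ∀ (n : ℕ) (hn : n ≤ d) (v₁ : H₁ n) (v₂ : H₂ n),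
      chainApply (H := fun j => l2 (idx d H₁ j × idx d H₂ j))
        (fun i => ⇑(tensorOp (Aop d H₁ e01 ed1 ξ₁ i (t i).1) (Aop d H₂ e02 ed2 ξ₂ i (t i).2)))
        n (tvec (R d H₁ e01 ed1 n hn v₁) (R d H₂ e02 ed2 n hn v₂))
      = tvec
          (R d H₁ e01 ed1 0 (Nat.zero_le d)
            (chainApply (H := H₁) (fun i => ⇑(ξ₁ i (t i).1)) n v₁))
          (R d H₂ e02 ed2 0 (Nat.zero_le d)
            (chainApply (H := H₂) (fun i => ⇑(ξ₂ i (t i).2)) n v₂)) := by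
  intro n
  induction n with
  | zero => intro hn v₁ v₂; rfl
  | succ n ih =>
    intro hn v₁ v₂
    have step :
        (tensorOp (Aop d H₁ e01 ed1 ξ₁ n (t n).1) (Aop d H₂ e02 ed2 ξ₂ n (t n).2))
            (tvec (R d H₁ e01 ed1 (n+1) hn v₁) (R d H₂ e02 ed2 (n+1) hn v₂))
          = tvec (R d H₁ e01 ed1 n (Nat.le_of_succ_le hn) (ξ₁ n (t n).1 v₁))
              (R d H₂ e02 ed2 n (Nat.le_of_succ_le hn) (ξ₂ n (t n).2 v₂)) := by
      rw [tensorOp_tvec, Aop_apply d H₁ e01 ed1 ξ₁ n hn, Aop_apply d H₂ e02 ed2 ξ₂ n hn]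
    show chainApply (H := fun j => l2 (idx d H₁ j × idx d H₂ j))
        (fun i => ⇑(tensorOp (Aop d H₁ e01 ed1 ξ₁ i (t i).1) (Aop d H₂ e02 ed2 ξ₂ i (t i).2))) n
        ((tensorOp (Aop d H₁ e01 ed1 ξ₁ n (t n).1) (Aop d H₂ e02 ed2 ξ₂ n (t n).2))
          (tvec (R d H₁ e01 ed1 (n+1) hn v₁) (R d H₂ e02 ed2 (n+1) hn v₂))) = _
    rw [step]
    exact ih (Nat.le_of_succ_le hn) _ _

end Chain
end Md

/-- if `φ₁ ∈ M_d(G)` with bound at most `C₁` and `φ₂ ∈ M_d(H)` with bound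
at most `C₂`, then `(x, y) ↦ φ₁ x * φ₂ y` lies in `M_d(G × H)` with bound at most
`C₁ * C₂`. -/
theorem md_product (G : Type*) [Group G] (H : Type*) [Group H]
    (d : ℕ) (hd : 2 ≤ d) (C₁ C₂ : ℝ) (hC₁ : 0 ≤ C₁) (hC₂ : 0 ≤ C₂)
    (φ₁ : G → ℂ) (φ₂ : H → ℂ)
    (h₁ : HasMdDecomp G d φ₁ C₁) (h₂ : HasMdDecomp H d φ₂ C₂) :
    HasMdDecomp (G × H) d (fun p => φ₁ p.1 * φ₂ p.2) (C₁ * C₂) := by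
  classical
  obtain ⟨H₁, i₁n, i₁i, i₁c, e01, ed1, ξ₁, M₁, hM₁, hchain₁, hprod₁⟩ := h₁
  obtain ⟨H₂, i₂n, i₂i, i₂c, e02, ed2, ξ₂, M₂, hM₂, hchain₂, hprod₂⟩ := h₂
  letI := i₁n; letI := i₁i; letI := i₁c
  letI := i₂n; letI := i₂i; letI := i₂c
  haveI : Unique (Md.idx d H₁ 0) := Md.uidxZero d H₁
  haveI : Unique (Md.idx d H₂ 0) := Md.uidxZero d H₂
  haveI : Unique (Md.idx d H₁ d) := Md.uidxD d H₁
  haveI : Unique (Md.idx d H₂ d) := Md.uidxD d H₂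
  haveI : Unique (Md.idx d H₁ 0 × Md.idx d H₂ 0) :=
    ⟨⟨(default, default)⟩, fun p => Prod.ext (Unique.eq_default p.1) (Unique.eq_default p.2)⟩
  haveI : Unique (Md.idx d H₁ d × Md.idx d H₂ d) :=
    ⟨⟨(default, default)⟩, fun p => Prod.ext (Unique.eq_default p.1) (Unique.eq_default p.2)⟩
  set R1 := Md.R d H₁ e01 ed1 with hR1
  set R2 := Md.R d H₂ e02 ed2 with hR2
  set z₀ : l2 (Md.idx d H₁ 0 × Md.idx d H₂ 0) :=
    Md.tvec (R1 0 (Nat.zero_le d) (e01 1)) (R2 0 (Nat.zero_le d) (e02 1)) with hz₀def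
  have hz₀ : ‖z₀‖ = 1 := by
    rw [hz₀def, Md.norm_tvec]
    simp
  set zd : l2 (Md.idx d H₁ d × Md.idx d H₂ d) :=
    Md.tvec (R1 d le_rfl (ed1 1)) (R2 d le_rfl (ed2 1)) with hzddef
  have hzd : ‖zd‖ = 1 := by
    rw [hzddef, Md.norm_tvec]
    simp
  refine ⟨fun j => l2 (Md.idx d H₁ j × Md.idx d H₂ j),
    fun i => inferInstance, fun i => inferInstance, fun i => inferInstance,
    Md.unitEquiv z₀ hz₀, Md.unitEquiv zd hzd,
    fun j p => Md.tensorOp (Md.Aop d H₁ e01 ed1 ξ₁ j p.1) (Md.Aop d H₂ e02 ed2 ξ₂ j p.2),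
    fun j => M₁ j * M₂ j, ?_, ?_, ?_⟩
  · intro i hi t
    have hb1 : ‖Md.Aop d H₁ e01 ed1 ξ₁ i t.1‖ ≤ M₁ i :=
      le_trans (Md.Aop_norm_le d H₁ e01 ed1 ξ₁ i t.1) (hM₁ i hi t.1)
    have hb2 : ‖Md.Aop d H₂ e02 ed2 ξ₂ i t.2‖ ≤ M₂ i :=
      le_trans (Md.Aop_norm_le d H₂ e02 ed2 ξ₂ i t.2) (hM₂ i hi t.2)
    refine le_trans (Md.norm_tensorOp_le _ _) ?_
    exact mul_le_mul hb1 hb2 (norm_nonneg _) (le_trans (norm_nonneg _) hb1)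
  · intro t
    have hfst : (((List.range d).map t).prod).1
        = ((List.range d).map (fun i => (t i).1)).prod := by
      rw [← MonoidHom.coe_fst (M := G) (N := H), map_list_prod, List.map_map]
      rfl
    have hsnd : (((List.range d).map t).prod).2
        = ((List.range d).map (fun i => (t i).2)).prod := by
      rw [← MonoidHom.coe_snd (M := G) (N := H), map_list_prod, List.map_map]
      rfl
    set c₁ : H₁ 0 := chainApply (fun i => ⇑(ξ₁ i (t i).1)) d (ed1 1) with hc₁
    set c₂ : H₂ 0 := chainApply (fun i => ⇑(ξ₂ i (t i).2)) d (ed2 1) with hc₂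
    set a : ℂ := e01.symm c₁ with ha
    set b : ℂ := e02.symm c₂ with hb
    have lhs1 : φ₁ (((List.range d).map t).prod).1 = a := by
      rw [hfst]; rw [hchain₁ (fun i => (t i).1)]
    have lhs2 : φ₂ (((List.range d).map t).prod).2 = b := by
      rw [hsnd]; rw [hchain₂ (fun i => (t i).2)]
    show φ₁ _ * φ₂ _ = _
    rw [lhs1, lhs2]
    -- now compute the chain on the right
    have hed : Md.unitEquiv zd hzd 1 = Md.tvec (R1 d le_rfl (ed1 1)) (R2 d le_rfl (ed2 1)) := by
      rw [Md.unitEquiv_apply, one_smul, hzddef]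
    rw [hed]
    rw [Md.chain_eq d H₁ H₂ e01 ed1 e02 ed2 ξ₁ ξ₂ t d le_rfl (ed1 1) (ed2 1)]
    have hc₁' : c₁ = a • (e01 1) := by
      rw [ha, ← e01.map_smul, smul_eq_mul, mul_one, e01.apply_symm_apply]
    have hc₂' : c₂ = b • (e02 1) := by
      rw [hb, ← e02.map_smul, smul_eq_mul, mul_one, e02.apply_symm_apply]
    rw [← hc₁, ← hc₂, hc₁', hc₂', (R1 0 (Nat.zero_le d)).map_smul, (R2 0 (Nat.zero_le d)).map_smul,
      Md.tvec_smul_left, Md.tvec_smul_right, smul_smul]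
    rw [show (a * b) • Md.tvec (R1 0 (Nat.zero_le d) (e01 1)) (R2 0 (Nat.zero_le d) (e02 1))
        = Md.unitEquiv z₀ hz₀ (a * b) from (Md.unitEquiv_apply z₀ hz₀ (a*b)).symm ▸ rfl]
    rw [LinearIsometryEquiv.symm_apply_apply]
  · rw [Finset.prod_mul_distrib]
    have h2nn : (0:ℝ) ≤ ∏ i ∈ Finset.range d, M₂ i :=
      Finset.prod_nonneg fun i hi =>
        le_trans (norm_nonneg (ξ₂ i 1)) (hM₂ i (Finset.mem_range.mp hi) 1)
    exact mul_le_mul hprod₁ hprod₂ h2nn hC₁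
end
end

section
/- Let G and H be topological groups, d ≥ 2 an integer, and C_1, C_2 ≥ 1 real numbers. If G is M_d-weakly amenable with constant at most C_1 and H is M_d-weakly amenable with constant at most C_2, then the direct product G × H (with the product topology) is M_d-weakly amenable with constant at most C_1 · C_2. Consequently Λ(G × H, d) ≤ Λ(G, d) · Λ(H, d). -/
open scoped ENNReal

noncomputable section

section MdAuxSection

namespace MdAux

open TensorProduct
open scoped InnerProductSpace ComplexConjugate

variable {E F E' F' : Type} [NormedAddCommGroup E] [InnerProductSpace ℂ E]
  [NormedAddCommGroup F] [InnerProductSpace ℂ F]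
  [NormedAddCommGroup E'] [InnerProductSpace ℂ E']
  [NormedAddCommGroup F'] [InnerProductSpace ℂ F']

/-- inner functional against an elementary tensor -/
def innerR (a : E) (b : F) : E ⊗[ℂ] F →ₗ[ℂ] ℂ :=
  TensorProduct.lift (LinearMap.mk₂ ℂ (fun c d => ⟪a, c⟫_ℂ * ⟪b, d⟫_ℂ)
    (fun c c' d => by simp only [inner_add_right, smul_eq_mul]; ring)
    (fun r c d => by simp only [inner_smul_right, smul_eq_mul]; ring)
    (fun c d d' => by simp only [inner_add_right, smul_eq_mul]; ring)
    (fun r c d => by simp only [inner_smul_right, smul_eq_mul]; ring))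

@[simp] lemma innerR_tmul (a : E) (b : F) (c : E) (d : F) :
    innerR a b (c ⊗ₜ d) = ⟪a, c⟫_ℂ * ⟪b, d⟫_ℂ := rfl

lemma innerR_add_left (a a' : E) (b : F) : innerR (a + a') b = innerR a b + innerR a' b := by
  refine LinearMap.ext fun x => ?_
  refine x.induction_on (by simp) (fun c d => by simp [inner_add_left]; ring) ?_
  intro y z hy hz; simp_all [map_add]

lemma innerR_add_right (a : E) (b b' : F) : innerR a (b + b') = innerR a b + innerR a b' := by
  refine LinearMap.ext fun x => ?_
  refine x.induction_on (by simp) (fun c d => by simp [inner_add_left]; ring) ?_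
  intro y z hy hz; simp_all [map_add]

lemma innerR_smul_left (r : ℂ) (a : E) (b : F) : innerR (r • a) b = conj r • innerR a b := by
  refine LinearMap.ext fun x => ?_
  refine x.induction_on (by simp) (fun c d => by simp [inner_smul_left]; ring) ?_
  intro y z hy hz; simp_all [map_add, smul_add]

lemma innerR_smul_right (r : ℂ) (a : E) (b : F) : innerR a (r • b) = conj r • innerR a b := by
  refine LinearMap.ext fun x => ?_
  refine x.induction_on (by simp) (fun c d => by simp [inner_smul_left]; ring) ?_
  intro y z hy hz; simp_all [map_add, smul_add]

/-- the sesquilinear inner product on the algebraic tensor product -/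
def innerT : E ⊗[ℂ] F →+ (E ⊗[ℂ] F →ₗ[ℂ] ℂ) :=
  TensorProduct.liftAddHom
    (AddMonoidHom.mk' (fun a => AddMonoidHom.mk' (fun b => innerR a b)
        (fun b b' => innerR_add_right a b b'))
      (fun a a' => by ext b : 1; exact innerR_add_left a a' b))
    (fun r a b => by
      simp only [AddMonoidHom.mk'_apply]
      rw [innerR_smul_left, innerR_smul_right])

@[simp] lemma innerT_tmul (a : E) (b : F) :
    (innerT (a ⊗ₜ[ℂ] b) : E ⊗[ℂ] F →ₗ[ℂ] ℂ) = innerR a b := by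
  simp [innerT]

instance instInnerTensor : Inner ℂ (E ⊗[ℂ] F) := ⟨fun x y => innerT x y⟩

lemma innerTensor_def (x y : E ⊗[ℂ] F) : ⟪x, y⟫_ℂ = innerT x y := rfl

@[simp] lemma inner_tmul_tmul (a : E) (b : F) (c : E) (d : F) :
    ⟪a ⊗ₜ[ℂ] b, c ⊗ₜ[ℂ] d⟫_ℂ = ⟪a, c⟫_ℂ * ⟪b, d⟫_ℂ := by
  simp [innerTensor_def]


lemma exists_orthonormal_right (x : E ⊗[ℂ] F) :
    ∃ (n : ℕ) (u : Fin n → E) (v : Fin n → F), Orthonormal ℂ v ∧ x = ∑ i, u i ⊗ₜ[ℂ] v i := by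
  obtain ⟨S, rfl⟩ := TensorProduct.exists_finset x
  set W : Submodule ℂ F := Submodule.span ℂ (Prod.snd '' (S : Set (E × F))) with hW
  haveI : FiniteDimensional ℂ W :=
    FiniteDimensional.span_of_finite ℂ ((S.finite_toSet).image _)
  set b := stdOrthonormalBasis ℂ W with hb
  have hmem : ∀ p ∈ S, p.2 ∈ W := fun p hp =>
    Submodule.subset_span ⟨p, hp, rfl⟩
  refine ⟨Module.finrank ℂ W,
    fun j => ∑ p ∈ S.attach, (b.repr ⟨p.1.2, hmem p.1 p.2⟩ j) • p.1.1,
    fun j => ((b j : W) : F), ?_, ?_⟩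
  · rw [orthonormal_iff_ite]
    intro i j
    have h := (orthonormal_iff_ite.mp b.orthonormal) i j
    rwa [Submodule.coe_inner] at h
  · rw [← Finset.sum_attach S (fun p => p.1 ⊗ₜ[ℂ] p.2)]
    have step1 : ∀ j, (∑ p ∈ S.attach, (b.repr ⟨p.1.2, hmem p.1 p.2⟩ j) • p.1.1) ⊗ₜ[ℂ]
        ((b j : W) : F)
        = ∑ p ∈ S.attach, ((b.repr ⟨p.1.2, hmem p.1 p.2⟩ j) • p.1.1) ⊗ₜ[ℂ] ((b j : W) : F) :=
      fun j => TensorProduct.sum_tmul _ _ _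
    rw [Finset.sum_congr rfl fun j _ => step1 j, Finset.sum_comm]
    refine Finset.sum_congr rfl fun p _ => ?_
    have step2 : ∀ j, ((b.repr ⟨p.1.2, hmem p.1 p.2⟩ j) • p.1.1) ⊗ₜ[ℂ] ((b j : W) : F)
        = p.1.1 ⊗ₜ[ℂ] ((b.repr ⟨p.1.2, hmem p.1 p.2⟩ j) • ((b j : W) : F)) :=
      fun j => TensorProduct.smul_tmul _ _ _
    rw [Finset.sum_congr rfl fun j _ => step2 j, ← TensorProduct.tmul_sum]
    congr 1
    have : ∑ j, (b.repr ⟨p.1.2, hmem p.1 p.2⟩ j) • ((b j : W) : F)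
        = ((∑ j, (b.repr ⟨p.1.2, hmem p.1 p.2⟩ j) • b j : W) : F) := by
      push_cast; rfl
    rw [this, b.sum_repr ⟨p.1.2, hmem p.1 p.2⟩]

lemma exists_orthonormal_left (x : E ⊗[ℂ] F) :
    ∃ (n : ℕ) (u : Fin n → E) (v : Fin n → F), Orthonormal ℂ u ∧ x = ∑ i, u i ⊗ₜ[ℂ] v i := by
  obtain ⟨n, u, v, hv, hx⟩ := exists_orthonormal_right (TensorProduct.comm ℂ E F x)
  refine ⟨n, v, u, hv, ?_⟩
  have := congrArg (TensorProduct.comm ℂ E F).symm hx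
  rw [LinearEquiv.symm_apply_apply] at this
  rw [this, map_sum]
  rfl


lemma innerT_smul (r : ℂ) (x : E ⊗[ℂ] F) : innerT (r • x) = conj r • innerT x := by
  refine x.induction_on ?_ (fun a b => ?_) (fun y z hy hz => ?_)
  · simp
  · rw [TensorProduct.smul_tmul']
    refine LinearMap.ext fun w => ?_
    simp [innerR_smul_left]
  · rw [smul_add, map_add, hy, hz, map_add, smul_add]

lemma innerT_conj_symm (x y : E ⊗[ℂ] F) : conj (innerT y x) = innerT x y := by
  refine x.induction_on ?_ (fun a b => ?_) (fun x₁ x₂ h₁ h₂ => ?_)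
  · simp
  · refine y.induction_on ?_ (fun c d => ?_) (fun y₁ y₂ h₁ h₂ => ?_)
    · simp
    · simp only [innerT_tmul, innerR_tmul, map_mul, inner_conj_symm]
    · simp only [map_add, LinearMap.add_apply, RingHom.map_add, h₁, h₂]
  · simp only [map_add, LinearMap.add_apply, RingHom.map_add, h₁, h₂]

lemma inner_sum_tmul_right {n : ℕ} (u w : Fin n → E) (v : Fin n → F) (hv : Orthonormal ℂ v) :
    ⟪∑ i, u i ⊗ₜ[ℂ] v i, ∑ i, w i ⊗ₜ[ℂ] v i⟫_ℂ = ∑ i, ⟪u i, w i⟫_ℂ := by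
  have hite := orthonormal_iff_ite.mp hv
  rw [innerTensor_def]
  simp only [map_sum, LinearMap.sum_apply, innerT_tmul, innerR_tmul]
  simp [hite, Finset.sum_ite_eq, Finset.sum_ite_eq']

lemma inner_sum_tmul_left {n : ℕ} (u : Fin n → E) (v w : Fin n → F) (hu : Orthonormal ℂ u) :
    ⟪∑ i, u i ⊗ₜ[ℂ] v i, ∑ i, u i ⊗ₜ[ℂ] w i⟫_ℂ = ∑ i, ⟪v i, w i⟫_ℂ := by
  have hite := orthonormal_iff_ite.mp hu
  rw [innerTensor_def]
  simp only [map_sum, LinearMap.sum_apply, innerT_tmul, innerR_tmul]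
  simp [hite, Finset.sum_ite_eq, Finset.sum_ite_eq']

def tensorCore : InnerProductSpace.Core ℂ (E ⊗[ℂ] F) where
  toInner := instInnerTensor
  conj_inner_symm x y := innerT_conj_symm x y
  re_inner_nonneg x := by
    obtain ⟨n, u, v, hv, rfl⟩ := exists_orthonormal_right x
    rw [inner_sum_tmul_right u u v hv, map_sum]
    refine Finset.sum_nonneg fun i _ => ?_
    simpa using inner_self_nonneg (𝕜 := ℂ) (x := u i)
  definite x hx := by
    obtain ⟨n, u, v, hv, rfl⟩ := exists_orthonormal_right x
    rw [inner_sum_tmul_right u u v hv] at hx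
    have hre : ∑ i, (‖u i‖ : ℝ) ^ 2 = 0 := by
      have h2 := congrArg Complex.re hx
      rw [Complex.re_sum] at h2
      simpa [inner_self_eq_norm_sq_to_K, ← Complex.ofReal_pow, Complex.ofReal_re] using h2
    have hz : ∀ i ∈ Finset.univ, (‖u i‖ : ℝ) ^ 2 = 0 :=
      (Finset.sum_eq_zero_iff_of_nonneg fun i _ => by positivity).mp hre
    have hu : ∀ i, u i = 0 := fun i => by
      have := hz i (Finset.mem_univ i)
      simpa [pow_eq_zero_iff] using this
    simp [hu]
  add_left x y z := by
    show innerT (x + y) z = innerT x z + innerT y z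
    rw [map_add]; rfl
  smul_left x y r := by
    show innerT (r • x) y = conj r * innerT x y
    rw [innerT_smul]; rfl

instance tensorNormedAddCommGroup : NormedAddCommGroup (E ⊗[ℂ] F) :=
  (tensorCore (E := E) (F := F)).toNormedAddCommGroup

instance tensorInnerProductSpace : InnerProductSpace ℂ (E ⊗[ℂ] F) :=
  InnerProductSpace.ofCore (tensorCore (E := E) (F := F)).toCore


lemma norm_tmul (a : E) (b : F) : ‖a ⊗ₜ[ℂ] b‖ = ‖a‖ * ‖b‖ := by
  have h : ⟪a ⊗ₜ[ℂ] b, a ⊗ₜ[ℂ] b⟫_ℂ = ((‖a‖ * ‖b‖ : ℝ) : ℂ) ^ 2 := by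
    rw [inner_tmul_tmul, inner_self_eq_norm_sq_to_K, inner_self_eq_norm_sq_to_K]
    norm_cast
    exact congrArg _ (mul_pow _ _ _).symm
  rw [@norm_eq_sqrt_re_inner ℂ]; erw [h]; rw [← Complex.ofReal_pow]
  have : (((((‖a‖ * ‖b‖ : ℝ)) ^ 2 : ℝ) : ℂ)).re = ((‖a‖ * ‖b‖ : ℝ)) ^ 2 := Complex.ofReal_re _
  rw [show (RCLike.re ((((‖a‖ * ‖b‖ : ℝ) ^ 2 : ℝ)) : ℂ) : ℝ) = (‖a‖ * ‖b‖ : ℝ) ^ 2 from this]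
  exact Real.sqrt_sq (by positivity)

lemma norm_sq_sum_tmul_right {n : ℕ} (u : Fin n → E) (v : Fin n → F) (hv : Orthonormal ℂ v) :
    ‖∑ i, u i ⊗ₜ[ℂ] v i‖ ^ 2 = ∑ i, ‖u i‖ ^ 2 := by
  rw [← inner_self_eq_norm_sq (𝕜 := ℂ)]; erw [inner_sum_tmul_right u u v hv]; rw [map_sum]
  exact Finset.sum_congr rfl fun i _ => inner_self_eq_norm_sq (𝕜 := ℂ) (u i)

lemma norm_sq_sum_tmul_left {n : ℕ} (u : Fin n → E) (v : Fin n → F) (hu : Orthonormal ℂ u) :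
    ‖∑ i, u i ⊗ₜ[ℂ] v i‖ ^ 2 = ∑ i, ‖v i‖ ^ 2 := by
  rw [← inner_self_eq_norm_sq (𝕜 := ℂ)]; erw [inner_sum_tmul_left u v v hu]; rw [map_sum]
  exact Finset.sum_congr rfl fun i _ => inner_self_eq_norm_sq (𝕜 := ℂ) (v i)

lemma norm_map_right_le (A : E →L[ℂ] E') (x : E ⊗[ℂ] F) :
    ‖TensorProduct.map A.toLinearMap LinearMap.id x‖ ≤ ‖A‖ * ‖x‖ := by
  obtain ⟨n, u, v, hv, rfl⟩ := exists_orthonormal_right x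
  have hmap : TensorProduct.map A.toLinearMap LinearMap.id (∑ i, u i ⊗ₜ[ℂ] v i)
      = ∑ i, (A (u i)) ⊗ₜ[ℂ] v i := by
    rw [map_sum]; exact Finset.sum_congr rfl fun i _ => rfl
  rw [hmap]
  have h1 : ‖∑ i, (A (u i)) ⊗ₜ[ℂ] v i‖ ^ 2 ≤ (‖A‖ * ‖∑ i, u i ⊗ₜ[ℂ] v i‖) ^ 2 := by
    rw [norm_sq_sum_tmul_right _ v hv, mul_pow, norm_sq_sum_tmul_right u v hv,
      Finset.mul_sum]
    refine Finset.sum_le_sum fun i _ => ?_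
    have := A.le_opNorm (u i)
    calc ‖A (u i)‖ ^ 2 ≤ (‖A‖ * ‖u i‖) ^ 2 := by
          apply pow_le_pow_left₀ (norm_nonneg _) this
      _ = ‖A‖ ^ 2 * ‖u i‖ ^ 2 := by ring
  exact (pow_le_pow_iff_left₀ (norm_nonneg _) (by positivity) (by norm_num)).mp h1

lemma norm_map_left_le (B : F →L[ℂ] F') (x : E ⊗[ℂ] F) :
    ‖TensorProduct.map LinearMap.id B.toLinearMap x‖ ≤ ‖B‖ * ‖x‖ := by
  obtain ⟨n, u, v, hu, rfl⟩ := exists_orthonormal_left x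
  have hmap : TensorProduct.map LinearMap.id B.toLinearMap (∑ i, u i ⊗ₜ[ℂ] v i)
      = ∑ i, (u i) ⊗ₜ[ℂ] (B (v i)) := by
    rw [map_sum]; exact Finset.sum_congr rfl fun i _ => rfl
  rw [hmap]
  have h1 : ‖∑ i, (u i) ⊗ₜ[ℂ] (B (v i))‖ ^ 2 ≤ (‖B‖ * ‖∑ i, u i ⊗ₜ[ℂ] v i‖) ^ 2 := by
    rw [norm_sq_sum_tmul_left u _ hu, mul_pow, norm_sq_sum_tmul_left u v hu,
      Finset.mul_sum]
    refine Finset.sum_le_sum fun i _ => ?_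
    calc ‖B (v i)‖ ^ 2 ≤ (‖B‖ * ‖v i‖) ^ 2 := by
          apply pow_le_pow_left₀ (norm_nonneg _) (B.le_opNorm (v i))
      _ = ‖B‖ ^ 2 * ‖v i‖ ^ 2 := by ring
  exact (pow_le_pow_iff_left₀ (norm_nonneg _) (by positivity) (by norm_num)).mp h1


open UniformSpace UniformSpace.Completion in
lemma norm_le_one_mul_norm_toComplL (x : E ⊗[ℂ] F) :
    ‖x‖ ≤ ((1 : NNReal) : ℝ) * ‖(toComplL (𝕜 := ℂ)) x‖ := by
  simp [UniformSpace.Completion.norm_coe]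

def mapCLM (A : E →L[ℂ] E') (B : F →L[ℂ] F') : E ⊗[ℂ] F →L[ℂ] E' ⊗[ℂ] F' :=
  LinearMap.mkContinuous (TensorProduct.map A.toLinearMap B.toLinearMap) (‖A‖ * ‖B‖) fun x => by
    have hcomp : TensorProduct.map A.toLinearMap B.toLinearMap x
        = TensorProduct.map A.toLinearMap LinearMap.id
            (TensorProduct.map LinearMap.id B.toLinearMap x) := by
      rw [← LinearMap.comp_apply, ← TensorProduct.map_comp]
      simp
    rw [hcomp]
    calc ‖TensorProduct.map A.toLinearMap LinearMap.id
            (TensorProduct.map LinearMap.id B.toLinearMap x)‖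
        ≤ ‖A‖ * ‖TensorProduct.map LinearMap.id B.toLinearMap x‖ := norm_map_right_le _ _
      _ ≤ ‖A‖ * (‖B‖ * ‖x‖) :=
          mul_le_mul_of_nonneg_left (norm_map_left_le _ _) (norm_nonneg _)
      _ = ‖A‖ * ‖B‖ * ‖x‖ := by ring

@[simp] lemma mapCLM_tmul (A : E →L[ℂ] E') (B : F →L[ℂ] F') (a : E) (b : F) :
    mapCLM A B (a ⊗ₜ[ℂ] b) = (A a) ⊗ₜ[ℂ] (B b) := rfl

lemma mapCLM_norm_le (A : E →L[ℂ] E') (B : F →L[ℂ] F') : ‖mapCLM A B‖ ≤ ‖A‖ * ‖B‖ :=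
  LinearMap.mkContinuous_norm_le _ (by positivity) _

section CompletionMaps

open UniformSpace UniformSpace.Completion

lemma toComplL_comp_norm_le (A : E →L[ℂ] E') (B : F →L[ℂ] F') :
    ‖(toComplL (𝕜 := ℂ)).comp (mapCLM A B)‖ ≤ ‖A‖ * ‖B‖ := by
  refine ContinuousLinearMap.opNorm_le_bound _ (by positivity) fun x => ?_
  rw [ContinuousLinearMap.comp_apply]
  have h1 : ‖(toComplL (𝕜 := ℂ)) (mapCLM A B x)‖ = ‖mapCLM A B x‖ := by
    rw [coe_toComplL]; exact UniformSpace.Completion.norm_coe _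
  rw [h1]
  calc ‖mapCLM A B x‖ ≤ ‖mapCLM A B‖ * ‖x‖ := (mapCLM A B).le_opNorm x
    _ ≤ ‖A‖ * ‖B‖ * ‖x‖ := mul_le_mul_of_nonneg_right (mapCLM_norm_le A B) (norm_nonneg _)

def mapCompl (A : E →L[ℂ] E') (B : F →L[ℂ] F') :
    Completion (E ⊗[ℂ] F) →L[ℂ] Completion (E' ⊗[ℂ] F') :=
  ContinuousLinearMap.extend ((toComplL (𝕜 := ℂ)).comp (mapCLM A B)) (toComplL (𝕜 := ℂ))

lemma mapCompl_coe (A : E →L[ℂ] E') (B : F →L[ℂ] F') (x : E ⊗[ℂ] F) :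
    mapCompl A B (↑x : Completion (E ⊗[ℂ] F)) = (↑(mapCLM A B x) : Completion (E' ⊗[ℂ] F')) := by
  have h := ContinuousLinearMap.extend_eq ((toComplL (𝕜 := ℂ)).comp (mapCLM A B))
    (by rw [coe_toComplL]; exact UniformSpace.Completion.denseRange_coe)
    (ContinuousLinearMap.isUniformEmbedding_of_bound _ norm_le_one_mul_norm_toComplL).isUniformInducing
    x
  simpa [mapCompl] using h

lemma mapCompl_norm_le (A : E →L[ℂ] E') (B : F →L[ℂ] F') : ‖mapCompl A B‖ ≤ ‖A‖ * ‖B‖ := by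
  have h := ContinuousLinearMap.opNorm_extend_le ((toComplL (𝕜 := ℂ)).comp (mapCLM A B))
    (by rw [coe_toComplL]; exact UniformSpace.Completion.denseRange_coe)
    (N := 1) norm_le_one_mul_norm_toComplL
  refine le_trans h ?_
  simpa using toComplL_comp_norm_le A B

end CompletionMaps


section UnitTensor

open UniformSpace

variable (e : ℂ ≃ₗᵢ[ℂ] E) (f : ℂ ≃ₗᵢ[ℂ] F)

lemma coe_tmul_eq_smul (a : E) (b : F) :
    ((a ⊗ₜ[ℂ] b : E ⊗[ℂ] F) : Completion (E ⊗[ℂ] F))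
      = (e.symm a * f.symm b) • ((e 1 ⊗ₜ[ℂ] f 1 : E ⊗[ℂ] F) : Completion (E ⊗[ℂ] F)) := by
  have ha : a = (e.symm a) • e 1 := by
    calc a = e (e.symm a) := (e.apply_symm_apply a).symm
      _ = e ((e.symm a) • (1 : ℂ)) := by rw [smul_eq_mul, mul_one]
      _ = (e.symm a) • e 1 := e.map_smul _ _
  have hb : b = (f.symm b) • f 1 := by
    calc b = f (f.symm b) := (f.apply_symm_apply b).symm
      _ = f ((f.symm b) • (1 : ℂ)) := by rw [smul_eq_mul, mul_one]
      _ = (f.symm b) • f 1 := f.map_smul _ _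
  conv_lhs => rw [ha, hb]
  rw [← TensorProduct.smul_tmul', TensorProduct.tmul_smul, UniformSpace.Completion.coe_smul,
    UniformSpace.Completion.coe_smul, smul_smul]

def unitTensorAux : ℂ →ₗᵢ[ℂ] Completion (E ⊗[ℂ] F) where
  toLinearMap := LinearMap.toSpanSingleton ℂ _
    (((e 1 ⊗ₜ[ℂ] f 1 : E ⊗[ℂ] F)) : Completion (E ⊗[ℂ] F))
  norm_map' z := by
    simp only [LinearMap.toSpanSingleton_apply, norm_smul,
      UniformSpace.Completion.norm_coe, norm_tmul, e.norm_map, f.norm_map]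
    simp

lemma unitTensorAux_surjective : Function.Surjective (unitTensorAux e f) := by
  set g : Completion (E ⊗[ℂ] F) := ((e 1 ⊗ₜ[ℂ] f 1 : E ⊗[ℂ] F) : Completion (E ⊗[ℂ] F)) with hg
  haveI : FiniteDimensional ℂ (Submodule.span ℂ ({g} : Set (Completion (E ⊗[ℂ] F)))) :=
    FiniteDimensional.span_of_finite ℂ (Set.finite_singleton g)
  have hclosed : IsClosed ((Submodule.span ℂ ({g} : Set (Completion (E ⊗[ℂ] F)))) : Set (Completion (E ⊗[ℂ] F))) :=
    Submodule.closed_of_finiteDimensional (Submodule.span ℂ ({g} : Set (Completion (E ⊗[ℂ] F))))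
  have hsub : ∀ x : E ⊗[ℂ] F, (↑x : Completion (E ⊗[ℂ] F)) ∈ Submodule.span ℂ {g} := by
    intro x
    refine x.induction_on ?_ (fun a b => ?_) (fun x y hx hy => ?_)
    · rw [UniformSpace.Completion.coe_zero]; exact Submodule.zero_mem _
    · rw [coe_tmul_eq_smul e f a b]
      exact Submodule.smul_mem _ _ (Submodule.mem_span_singleton_self g)
    · rw [UniformSpace.Completion.coe_add]; exact Submodule.add_mem _ hx hy
  have hall : ∀ y : Completion (E ⊗[ℂ] F), y ∈ Submodule.span ℂ {g} := by
    intro y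
    have h1 : Set.range ((↑) : E ⊗[ℂ] F → Completion (E ⊗[ℂ] F))
        ⊆ (Submodule.span ℂ ({g} : Set (Completion (E ⊗[ℂ] F))) : Set _) := by
      rintro _ ⟨x, rfl⟩; exact hsub x
    have h2 := closure_minimal h1 hclosed
    have h3 : closure (Set.range ((↑) : E ⊗[ℂ] F → Completion (E ⊗[ℂ] F))) = Set.univ :=
      UniformSpace.Completion.denseRange_coe.closure_range
    rw [h3] at h2
    exact h2 (Set.mem_univ y)
  intro y
  obtain ⟨c, hc⟩ := Submodule.mem_span_singleton.mp (hall y)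
  exact ⟨c, by simpa [unitTensorAux, LinearMap.toSpanSingleton_apply] using hc⟩

def unitTensor : ℂ ≃ₗᵢ[ℂ] Completion (E ⊗[ℂ] F) :=
  LinearIsometryEquiv.ofSurjective (unitTensorAux e f) (unitTensorAux_surjective e f)

lemma unitTensor_apply (z : ℂ) :
    unitTensor e f z = z • ((e 1 ⊗ₜ[ℂ] f 1 : E ⊗[ℂ] F) : Completion (E ⊗[ℂ] F)) := rfl

lemma unitTensor_one :
    unitTensor e f 1 = ((e 1 ⊗ₜ[ℂ] f 1 : E ⊗[ℂ] F) : Completion (E ⊗[ℂ] F)) := by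
  rw [unitTensor_apply, one_smul]

lemma unitTensor_symm_coe_tmul (a : E) (b : F) :
    (unitTensor e f).symm ((a ⊗ₜ[ℂ] b : E ⊗[ℂ] F) : Completion (E ⊗[ℂ] F))
      = e.symm a * f.symm b := by
  have h : (unitTensor e f) (e.symm a * f.symm b)
      = ((a ⊗ₜ[ℂ] b : E ⊗[ℂ] F) : Completion (E ⊗[ℂ] F)) := by
    rw [unitTensor_apply]; exact (coe_tmul_eq_smul e f a b).symm
  rw [← h, LinearIsometryEquiv.symm_apply_apply]

end UnitTensor

end MdAux

end MdAuxSection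


/-- A topological group `G` is `M_d`-weakly amenable with constant at most `C` if for every
compact `K ⊆ G`, every `ε > 0` and every `C' > C` there is a continuous compactly supported
`φ : G → ℂ` admitting an `M_d`-decomposition of bound at most `C'` with `|φ x - 1| < ε`
on `K`. -/
def MdWeaklyAmenableWith (G : Type*) [Group G] [TopologicalSpace G] (d : ℕ) (C : ℝ) : Prop :=
  ∀ K : Set G, IsCompact K → ∀ ε : ℝ, 0 < ε → ∀ C' : ℝ, C < C' →
    ∃ φ : G → ℂ, Continuous φ ∧ HasCompactSupport φ ∧ HasMdDecomp G d φ C' ∧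
      ∀ x ∈ K, ‖φ x - 1‖ < ε

/-- The constant `Λ(G, d) ∈ [1, ∞]`: the infimum of all `C ≥ 1` such that `G` is
`M_d`-weakly amenable with constant at most `C` (`∞` if there is no such `C`). -/
def LambdaConst (G : Type*) [Group G] [TopologicalSpace G] (d : ℕ) : ℝ≥0∞ :=
  sInf {x : ℝ≥0∞ | ∃ C : ℝ, 1 ≤ C ∧ x = ENNReal.ofReal C ∧ MdWeaklyAmenableWith G d C}

open UniformSpace TensorProduct in
lemma hasMdDecomp_mul {G H' : Type*} [Group G] [Group H'] {d : ℕ} (hd : 0 < d)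
    {φ₁ : G → ℂ} {φ₂ : H' → ℂ} {C₁ C₂ : ℝ}
    (h₁ : HasMdDecomp G d φ₁ C₁) (h₂ : HasMdDecomp H' d φ₂ C₂) :
    HasMdDecomp (G × H') d (fun p => φ₁ p.1 * φ₂ p.2) (C₁ * C₂) := by
  obtain ⟨HA, iA1, iA2, iA3, e₀, ed, ξ, M₁, hξ, hchain₁, hM₁⟩ := h₁
  obtain ⟨HB, iB1, iB2, iB3, f₀, fd, η, M₂, hη, hchain₂, hM₂⟩ := h₂
  letI := iA1; letI := iA2; letI := iA3
  letI := iB1; letI := iB2; letI := iB3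
  have hM₁nonneg : ∀ i, i < d → 0 ≤ M₁ i := fun i hi =>
    le_trans (norm_nonneg _) (hξ i hi 1)
  have hM₂nonneg : ∀ i, i < d → 0 ≤ M₂ i := fun i hi =>
    le_trans (norm_nonneg _) (hη i hi 1)
  refine ⟨fun i => Completion (HA i ⊗[ℂ] HB i),
    fun i => inferInstance, fun i => inferInstance, fun i => inferInstance,
    MdAux.unitTensor e₀ f₀, MdAux.unitTensor ed fd,
    fun i p => MdAux.mapCompl (ξ i p.1) (η i p.2),
    fun i => M₁ i * M₂ i, ?_, ?_, ?_⟩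
  · intro i hi p
    refine le_trans (MdAux.mapCompl_norm_le _ _) ?_
    exact mul_le_mul (hξ i hi p.1) (hη i hi p.2) (norm_nonneg _) (hM₁nonneg i hi)
  · intro t
    have key : ∀ n (a : HA n) (b : HB n),
        chainApply (H := fun i => Completion (HA i ⊗[ℂ] HB i))
            (fun i => ⇑(MdAux.mapCompl (ξ i (t i).1) (η i (t i).2))) n
            ((a ⊗ₜ[ℂ] b : HA n ⊗[ℂ] HB n) : Completion (HA n ⊗[ℂ] HB n))
          = (((chainApply (H := HA) (fun i => ⇑(ξ i (t i).1)) n a) ⊗ₜ[ℂ]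
              (chainApply (H := HB) (fun i => ⇑(η i (t i).2)) n b) : HA 0 ⊗[ℂ] HB 0)
              : Completion (HA 0 ⊗[ℂ] HB 0)) := by
      intro n
      induction n with
      | zero => intro a b; rfl
      | succ n ih =>
        intro a b
        have hstep : chainApply (H := fun i => Completion (HA i ⊗[ℂ] HB i))
              (fun i => ⇑(MdAux.mapCompl (ξ i (t i).1) (η i (t i).2))) (n+1)
              ((a ⊗ₜ[ℂ] b : HA (n+1) ⊗[ℂ] HB (n+1)) : Completion (HA (n+1) ⊗[ℂ] HB (n+1)))
            = chainApply (H := fun i => Completion (HA i ⊗[ℂ] HB i))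
              (fun i => ⇑(MdAux.mapCompl (ξ i (t i).1) (η i (t i).2))) n
              (MdAux.mapCompl (ξ n (t n).1) (η n (t n).2)
                ((a ⊗ₜ[ℂ] b : HA (n+1) ⊗[ℂ] HB (n+1)) : Completion (HA (n+1) ⊗[ℂ] HB (n+1)))) :=
          rfl
        rw [hstep, MdAux.mapCompl_coe, MdAux.mapCLM_tmul]
        exact ih _ _
    have hfst : (((List.range d).map t).prod).1
        = ((List.range d).map (fun i => (t i).1)).prod := by
      rw [show (((List.range d).map t).prod).1
          = (MonoidHom.fst G H') (((List.range d).map t).prod) from rfl,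
        ← List.prod_hom _ (MonoidHom.fst G H'), List.map_map]
      rfl
    have hsnd : (((List.range d).map t).prod).2
        = ((List.range d).map (fun i => (t i).2)).prod := by
      rw [show (((List.range d).map t).prod).2
          = (MonoidHom.snd G H') (((List.range d).map t).prod) from rfl,
        ← List.prod_hom _ (MonoidHom.snd G H'), List.map_map]
      rfl
    show φ₁ (((List.range d).map t).prod).1 * φ₂ (((List.range d).map t).prod).2 = _
    rw [hfst, hsnd, hchain₁ (fun i => (t i).1), hchain₂ (fun i => (t i).2),
      MdAux.unitTensor_one, key d (ed 1) (fd 1), MdAux.unitTensor_symm_coe_tmul]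
  · rw [Finset.prod_mul_distrib]
    have h1 : 0 ≤ ∏ i ∈ Finset.range d, M₁ i :=
      Finset.prod_nonneg fun i hi => hM₁nonneg i (Finset.mem_range.mp hi)
    have h2 : 0 ≤ ∏ i ∈ Finset.range d, M₂ i :=
      Finset.prod_nonneg fun i hi => hM₂nonneg i (Finset.mem_range.mp hi)
    exact mul_le_mul hM₁ hM₂ h2 (le_trans h1 hM₁)


/-- `M_d`-weak amenability is stable under direct products, with
submultiplicative constants; consequently `Λ(G × H, d) ≤ Λ(G, d) · Λ(H, d)`. -/
theorem mdWeaklyAmenable_prod (G : Type*) [Group G] [TopologicalSpace G] [IsTopologicalGroup G]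
    (H : Type*) [Group H] [TopologicalSpace H] [IsTopologicalGroup H]
    (d : ℕ) (hd : 2 ≤ d) :
    (∀ C₁ C₂ : ℝ, 1 ≤ C₁ → 1 ≤ C₂ →
      MdWeaklyAmenableWith G d C₁ → MdWeaklyAmenableWith H d C₂ →
        MdWeaklyAmenableWith (G × H) d (C₁ * C₂)) ∧
    LambdaConst (G × H) d ≤ LambdaConst G d * LambdaConst H d := by
  have hP : ∀ C₁ C₂ : ℝ, 1 ≤ C₁ → 1 ≤ C₂ →
      MdWeaklyAmenableWith G d C₁ → MdWeaklyAmenableWith H d C₂ →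
        MdWeaklyAmenableWith (G × H) d (C₁ * C₂) := by
    intro C₁ C₂ hC₁ hC₂ hG hH K hK ε hε C' hC'
    have hC₁₂ : (0 : ℝ) < C₁ * C₂ := mul_pos (by linarith) (by linarith)
    set r : ℝ := C' / (C₁ * C₂) with hr
    have hr1 : 1 < r := (one_lt_div hC₁₂).mpr hC'
    have hs1 : 1 < Real.sqrt r := by
      rw [show (1 : ℝ) = Real.sqrt 1 from Real.sqrt_one.symm]
      exact Real.sqrt_lt_sqrt (by norm_num) hr1
    have hD₁ : C₁ < C₁ * Real.sqrt r := by nlinarith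
    have hD₂ : C₂ < C₂ * Real.sqrt r := by nlinarith
    have hprod : (C₁ * Real.sqrt r) * (C₂ * Real.sqrt r) = C' := by
      have hss : Real.sqrt r * Real.sqrt r = r := Real.mul_self_sqrt (by linarith)
      calc (C₁ * Real.sqrt r) * (C₂ * Real.sqrt r)
          = (C₁ * C₂) * (Real.sqrt r * Real.sqrt r) := by ring
        _ = (C₁ * C₂) * r := by rw [hss]
        _ = C' := by rw [hr]; field_simp
    set δ : ℝ := min (ε / 4) 1 with hδ
    have hδpos : 0 < δ := lt_min (by linarith) one_pos
    have hδ4 : δ ≤ ε / 4 := min_le_left _ _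
    have hδ1 : δ ≤ 1 := min_le_right _ _
    obtain ⟨φ₁, hφ₁c, hφ₁s, hφ₁d, hφ₁K⟩ :=
      hG (Prod.fst '' K) (hK.image continuous_fst) δ hδpos (C₁ * Real.sqrt r) hD₁
    obtain ⟨φ₂, hφ₂c, hφ₂s, hφ₂d, hφ₂K⟩ :=
      hH (Prod.snd '' K) (hK.image continuous_snd) δ hδpos (C₂ * Real.sqrt r) hD₂
    refine ⟨fun p => φ₁ p.1 * φ₂ p.2,
      (hφ₁c.comp continuous_fst).mul (hφ₂c.comp continuous_snd), ?_, ?_, ?_⟩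
    · have h0 : Function.support (fun p : G × H => φ₁ p.1 * φ₂ p.2)
          ⊆ (Function.support φ₁) ×ˢ (Function.support φ₂) := by
        intro p hp
        rw [Function.mem_support] at hp
        exact ⟨left_ne_zero_of_mul hp, right_ne_zero_of_mul hp⟩
      have hsub : tsupport (fun p : G × H => φ₁ p.1 * φ₂ p.2)
          ⊆ (tsupport φ₁) ×ˢ (tsupport φ₂) := by
        calc tsupport (fun p : G × H => φ₁ p.1 * φ₂ p.2)
            ⊆ closure ((Function.support φ₁) ×ˢ (Function.support φ₂)) := closure_mono h0
          _ = (tsupport φ₁) ×ˢ (tsupport φ₂) := closure_prod_eq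
      exact IsCompact.of_isClosed_subset (hφ₁s.prod hφ₂s) (isClosed_tsupport _) hsub
    · have hdec := hasMdDecomp_mul (lt_of_lt_of_le (by norm_num) hd) hφ₁d hφ₂d
      rwa [hprod] at hdec
    · intro x hx
      have h1 := hφ₁K x.1 ⟨x, hx, rfl⟩
      have h2 := hφ₂K x.2 ⟨x, hx, rfl⟩
      have ha : ‖φ₁ x.1‖ ≤ 1 + δ := by
        calc ‖φ₁ x.1‖ = ‖(φ₁ x.1 - 1) + 1‖ := by ring_nf
          _ ≤ ‖φ₁ x.1 - 1‖ + ‖(1:ℂ)‖ := norm_add_le _ _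
          _ ≤ δ + 1 := by
              rw [norm_one]
              exact add_le_add h1.le le_rfl
          _ = 1 + δ := by ring
      have habs : ‖φ₁ x.1 * φ₂ x.2 - 1‖
          ≤ ‖φ₁ x.1‖ * ‖φ₂ x.2 - 1‖ + ‖φ₁ x.1 - 1‖ := by
        calc ‖φ₁ x.1 * φ₂ x.2 - 1‖
            = ‖φ₁ x.1 * (φ₂ x.2 - 1) + (φ₁ x.1 - 1)‖ := by ring_nf
          _ ≤ ‖φ₁ x.1 * (φ₂ x.2 - 1)‖ + ‖φ₁ x.1 - 1‖ :=
              norm_add_le _ _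
          _ = ‖φ₁ x.1‖ * ‖φ₂ x.2 - 1‖ + ‖φ₁ x.1 - 1‖ := by
              rw [norm_mul]
      have h0 : (0 : ℝ) ≤ ‖φ₂ x.2 - 1‖ := norm_nonneg _
      have hm : ‖φ₁ x.1‖ * ‖φ₂ x.2 - 1‖
          ≤ (1 + δ) * ‖φ₂ x.2 - 1‖ := mul_le_mul_of_nonneg_right ha h0
      have hm2 : (1 + δ) * ‖φ₂ x.2 - 1‖ < (1 + δ) * δ :=
        mul_lt_mul_of_pos_left h2 (by linarith)
      nlinarith
  refine ⟨hP, ?_⟩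
  have h1G : 1 ≤ LambdaConst G d :=
    le_sInf fun x hx => by
      obtain ⟨C, hC, rfl, -⟩ := hx
      exact ENNReal.one_le_ofReal.mpr hC
  have h1H : 1 ≤ LambdaConst H d :=
    le_sInf fun x hx => by
      obtain ⟨C, hC, rfl, -⟩ := hx
      exact ENNReal.one_le_ofReal.mpr hC
  have key : ∀ x ∈ {x : ℝ≥0∞ | ∃ C : ℝ, 1 ≤ C ∧ x = ENNReal.ofReal C ∧
        MdWeaklyAmenableWith G d C},
      ∀ y ∈ {x : ℝ≥0∞ | ∃ C : ℝ, 1 ≤ C ∧ x = ENNReal.ofReal C ∧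
        MdWeaklyAmenableWith H d C},
      LambdaConst (G × H) d ≤ x * y := by
    rintro x ⟨C₁, hC₁, rfl, hwa₁⟩ y ⟨C₂, hC₂, rfl, hwa₂⟩
    have hwa : MdWeaklyAmenableWith (G × H) d (C₁ * C₂) := hP C₁ C₂ hC₁ hC₂ hwa₁ hwa₂
    have hmem : ENNReal.ofReal (C₁ * C₂) ∈ {x : ℝ≥0∞ | ∃ C : ℝ, 1 ≤ C ∧
        x = ENNReal.ofReal C ∧ MdWeaklyAmenableWith (G × H) d C} :=
      ⟨C₁ * C₂, le_trans hC₁ (le_mul_of_one_le_right (by linarith) hC₂), rfl, hwa⟩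
    calc LambdaConst (G × H) d ≤ ENNReal.ofReal (C₁ * C₂) := sInf_le hmem
      _ = ENNReal.ofReal C₁ * ENNReal.ofReal C₂ := ENNReal.ofReal_mul (by linarith)
  have hG0 : LambdaConst G d ≠ 0 := ne_of_gt (lt_of_lt_of_le zero_lt_one h1G)
  have hH0 : LambdaConst H d ≠ 0 := ne_of_gt (lt_of_lt_of_le zero_lt_one h1H)
  rcases eq_or_ne (LambdaConst G d) ⊤ with hGt | hGt
  · rw [hGt, ENNReal.top_mul hH0]; exact le_top
  rcases eq_or_ne (LambdaConst H d) ⊤ with hHt | hHt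
  · rw [hHt, ENNReal.mul_top hG0]; exact le_top
  have hstep : LambdaConst G d * LambdaConst H d
      = ⨅ x : {x : ℝ≥0∞ | ∃ C : ℝ, 1 ≤ C ∧ x = ENNReal.ofReal C ∧
          MdWeaklyAmenableWith G d C}, ((x : ℝ≥0∞) * LambdaConst H d) := by
    rw [show LambdaConst G d = sInf {x : ℝ≥0∞ | ∃ C : ℝ, 1 ≤ C ∧ x = ENNReal.ofReal C ∧
        MdWeaklyAmenableWith G d C} from rfl, sInf_eq_iInf',
      ENNReal.iInf_mul_of_ne hH0 hHt]
  rw [hstep]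
  refine le_iInf fun x => ?_
  have hx := x.2
  obtain ⟨C₁, hC₁, hxeq, hwa₁⟩ := hx
  have hx0 : (x : ℝ≥0∞) ≠ 0 := by
    rw [hxeq]
    exact ne_of_gt (lt_of_lt_of_le zero_lt_one (ENNReal.one_le_ofReal.mpr hC₁))
  have hxt : (x : ℝ≥0∞) ≠ ⊤ := by rw [hxeq]; exact ENNReal.ofReal_ne_top
  have hstep2 : (x : ℝ≥0∞) * LambdaConst H d
      = ⨅ y : {x : ℝ≥0∞ | ∃ C : ℝ, 1 ≤ C ∧ x = ENNReal.ofReal C ∧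
          MdWeaklyAmenableWith H d C}, ((x : ℝ≥0∞) * (y : ℝ≥0∞)) := by
    rw [show LambdaConst H d = sInf {x : ℝ≥0∞ | ∃ C : ℝ, 1 ≤ C ∧ x = ENNReal.ofReal C ∧
        MdWeaklyAmenableWith H d C} from rfl, sInf_eq_iInf',
      ENNReal.mul_iInf_of_ne hx0 hxt]
  rw [hstep2]
  exact le_iInf fun y => key x x.2 y y.2
end
end

section
/- Let G be a locally compact Hausdorff topological group, K a compact normal subgroup of G, and G/K the quotient group with the quotient topology. Let d ≥ 2 be an integer and C ≥ 1 a real number. If G/K is M_d-weakly amenable with constant at most C, then G is M_d-weakly amenable with constant at most C; in particular Λ(G, d) ≤ Λ(G/K, d). -/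
open scoped ENNReal Pointwise

noncomputable section

/-- Preimage of a compact set under the quotient map by a compact subgroup is compact. -/
lemma isCompact_preimage_mk {G : Type*} [Group G] [TopologicalSpace G]
    [IsTopologicalGroup G] [LocallyCompactSpace G] [T2Space G]
    (K : Subgroup G) [K.Normal] (hK : IsCompact (K : Set G)) {L : Set (G ⧸ K)}
    (hL : IsCompact L) :
    IsCompact ((QuotientGroup.mk : G → G ⧸ K) ⁻¹' L) := by
  haveI : IsClosed (K : Set G) := hK.isClosed
  haveI : T3Space (G ⧸ K) := QuotientGroup.instT3Space K
  have hnhds : ∀ x : G ⧸ K, ∃ V : Set G, IsCompact V ∧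
      (QuotientGroup.mk : G → G ⧸ K) '' V ∈ nhds x := by
    intro x
    obtain ⟨g, rfl⟩ := QuotientGroup.mk_surjective x
    obtain ⟨V, hVc, hVn⟩ := exists_compact_mem_nhds g
    exact ⟨V, hVc, (QuotientGroup.isOpenMap_coe).image_mem_nhds hVn⟩
  choose V hVc hVn using hnhds
  obtain ⟨t, -, ht⟩ := hL.elim_nhds_subcover
    (fun x => (QuotientGroup.mk : G → G ⧸ K) '' V x) (fun x _ => hVn x)
  set S : Set G := ⋃ x ∈ t, V x with hS
  have hScomp : IsCompact S := t.isCompact_biUnion (fun x _ => hVc x)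
  have hsub : (QuotientGroup.mk : G → G ⧸ K) ⁻¹' L ⊆ (S * (K : Set G) : Set G) := by
    intro g hg
    obtain ⟨x, hxt, s, hsV, hsg⟩ := Set.mem_iUnion₂.mp (ht hg)
    have hk : s⁻¹ * g ∈ K := QuotientGroup.eq.mp hsg
    have : g = s * (s⁻¹ * g) := by group
    rw [this]
    exact Set.mul_mem_mul (Set.mem_biUnion hxt hsV) hk
  exact (hScomp.mul hK).of_isClosed_subset
    ((hL.isClosed).preimage continuous_quotient_mk') hsub

/-- `M_d`-weak amenability passes from `G ⧸ K` to `G` by pulling back along the quotient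
map, for every constant. -/
lemma mdWeaklyAmenableWith_of_quotient {G : Type*} [Group G] [TopologicalSpace G]
    [IsTopologicalGroup G] [LocallyCompactSpace G] [T2Space G]
    (K : Subgroup G) [K.Normal] (hK : IsCompact (K : Set G)) (d : ℕ) (C : ℝ)
    (h : MdWeaklyAmenableWith (G ⧸ K) d C) : MdWeaklyAmenableWith G d C := by
  intro Kc hKc ε hε C' hC'
  obtain ⟨φ, hφc, hφs, hφd, hφε⟩ :=
    h ((QuotientGroup.mk : G → G ⧸ K) '' Kc) (hKc.image continuous_quotient_mk') ε hε C' hC'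
  refine ⟨φ ∘ QuotientGroup.mk, hφc.comp continuous_quotient_mk', ?_, ?_, ?_⟩
  · -- compact support
    have hpre : IsCompact ((QuotientGroup.mk : G → G ⧸ K) ⁻¹' tsupport φ) :=
      isCompact_preimage_mk K hK hφs
    refine hpre.of_isClosed_subset (isClosed_tsupport _) ?_
    refine closure_minimal ?_ ((isClosed_tsupport φ).preimage continuous_quotient_mk')
    intro g hg
    exact subset_tsupport φ hg
  · -- decomposition
    obtain ⟨H, i1, i2, i3, e₀, ed, ξ, M, h1, h2, h3⟩ := hφd
    refine ⟨H, i1, i2, i3, e₀, ed, fun i g => ξ i (QuotientGroup.mk g), M,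
      fun i hi g => h1 i hi _, ?_, h3⟩
    intro t
    have := h2 (fun i => QuotientGroup.mk (t i))
    have hprod : ((List.range d).map fun i => (QuotientGroup.mk (t i) : G ⧸ K)).prod =
        QuotientGroup.mk (((List.range d).map t).prod) := by
      rw [show (fun i => (QuotientGroup.mk (t i) : G ⧸ K)) =
          (QuotientGroup.mk' K) ∘ t from rfl, ← List.map_map, ← map_list_prod]
      rfl
    rw [hprod] at this
    exact this
  · intro x hx
    exact hφε _ (Set.mem_image_of_mem _ hx)

/-- if `K` is a compact normal subgroup of a locally compact Hausdorff
group `G` and `G/K` is `M_d`-weakly amenable with constant at most `C`, then so is `G`;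
in particular `Λ(G, d) ≤ Λ(G/K, d)`. -/
theorem mdWeaklyAmenable_of_quotient (G : Type*) [Group G] [TopologicalSpace G]
    [IsTopologicalGroup G] [LocallyCompactSpace G] [T2Space G]
    (K : Subgroup G) [K.Normal] (hK : IsCompact (K : Set G))
    (d : ℕ) (hd : 2 ≤ d) (C : ℝ) (hC : 1 ≤ C)
    (h : MdWeaklyAmenableWith (G ⧸ K) d C) :
    MdWeaklyAmenableWith G d C ∧ LambdaConst G d ≤ LambdaConst (G ⧸ K) d := by
  refine ⟨mdWeaklyAmenableWith_of_quotient K hK d C h, ?_⟩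
  apply sInf_le_sInf
  rintro x ⟨C₀, hC₀, rfl, h₀⟩
  exact ⟨C₀, hC₀, rfl, mdWeaklyAmenableWith_of_quotient K hK d C₀ h₀⟩
end
end

section
/- Let G be a locally compact Hausdorff topological group, K a compact normal subgroup of G, and G/K the quotient group with the quotient topology. Let d ≥ 2 be an integer and C ≥ 1 a real number. If G is M_d-weakly amenable with constant at most C, then G/K is M_d-weakly amenable with constant at most C; in particular Λ(G/K, d) ≤ Λ(G, d). Combined with the converse direction, Λ(G, d) = Λ(G/K, d). -/
open scoped ENNReal
open MeasureTheory ComplexConjugate Topology Pointwise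
open scoped NNReal

noncomputable section

lemma chainApply_congr {H : ℕ → Type} (f g : ∀ i, H (i + 1) → H i)
    (n : ℕ) (h : ∀ i, i < n → f i = g i) (v : H n) :
    chainApply f n v = chainApply g n v := by
  induction n with
  | zero => rfl
  | succ n ih =>
    simp only [chainApply]
    rw [h n (Nat.lt_succ_self n)]
    exact ih (fun i hi => h i (hi.trans (Nat.lt_succ_self n))) _

def chainCLM {H : ℕ → Type} [∀ i, NormedAddCommGroup (H i)] [∀ i, InnerProductSpace ℂ (H i)]
    (g : ∀ i, H (i + 1) →L[ℂ] H i) : ∀ n, H n →L[ℂ] H 0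
  | 0 => ContinuousLinearMap.id ℂ (H 0)
  | n + 1 => (chainCLM g n).comp (g n)

lemma chainApply_eq_chainCLM {H : ℕ → Type} [∀ i, NormedAddCommGroup (H i)]
    [∀ i, InnerProductSpace ℂ (H i)] (g : ∀ i, H (i + 1) →L[ℂ] H i) (n : ℕ) (v : H n) :
    chainApply (fun i => ⇑(g i)) n v = chainCLM g n v := by
  induction n with
  | zero => rfl
  | succ n ih =>
    simp only [chainApply, chainCLM, ContinuousLinearMap.comp_apply]
    exact ih _

lemma exists_isCompact_image {X Y : Type*} [TopologicalSpace X] [TopologicalSpace Y]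
    [WeaklyLocallyCompactSpace X] {f : X → Y} (hf : IsOpenMap f) (hsurj : Function.Surjective f)
    {Q : Set Y} (hQ : IsCompact Q) : ∃ L : Set X, IsCompact L ∧ Q ⊆ f '' L := by
  choose g hg using hsurj
  choose N hNc hNn using fun x : X => exists_compact_mem_nhds x
  obtain ⟨t, ht⟩ := hQ.elim_finite_subcover (fun y : Q => f '' interior (N (g y)))
    (fun y => hf _ isOpen_interior)
    (fun y hy => Set.mem_iUnion.2 ⟨⟨y, hy⟩, ⟨g y, mem_interior_iff_mem_nhds.2 (hNn _), hg y⟩⟩)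
  refine ⟨⋃ i ∈ t, N (g i), t.finite_toSet.isCompact_biUnion (fun i _ => hNc _), ?_⟩
  intro y hy
  obtain ⟨i, hit, x, hx, rfl⟩ := Set.mem_iUnion₂.1 (ht hy)
  exact ⟨x, Set.mem_biUnion hit (interior_subset hx), rfl⟩

lemma exists_weak_integral {α : Type*} [TopologicalSpace α] [MeasurableSpace α]
    [OpensMeasurableSpace α] [CompactSpace α] (μ : Measure α) [IsProbabilityMeasure μ]
    {E : Type*} [NormedAddCommGroup E] [InnerProductSpace ℂ E] [CompleteSpace E]
    (F : α → E) {M : ℝ} (hM : ∀ k, ‖F k‖ ≤ M) (hM0 : 0 ≤ M)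
    (S : Set E) (hS : ∀ a ∈ S, Continuous fun k => (inner ℂ a (F k) : ℂ)) :
    ∃ w : E, ‖w‖ ≤ M ∧ ∀ a ∈ S, (inner ℂ a w : ℂ) = ∫ k, inner ℂ a (F k) ∂μ := by
  have hcs : ∀ f : α → ℂ, HasCompactSupport f := fun f =>
    IsCompact.of_isClosed_subset isCompact_univ (isClosed_tsupport f) (Set.subset_univ _)
  set sp := Submodule.span ℂ S with hsp
  have hcont : ∀ v ∈ sp, Continuous fun k => (inner ℂ v (F k) : ℂ) := by
    intro v hv
    induction hv using Submodule.span_induction with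
    | mem a ha => exact hS a ha
    | zero => simp only [inner_zero_left]; exact continuous_const
    | add u v _ _ ihu ihv => simp only [inner_add_left]; exact ihu.add ihv
    | smul c v _ ih => simp only [inner_smul_left]; exact continuous_const.mul ih
  have hint : ∀ v ∈ sp, Integrable (fun k => (inner ℂ v (F k) : ℂ)) μ := fun v hv =>
    ((hcont v hv).integrable_of_hasCompactSupport (hcs _))
  let ℓlin : ↥sp →ₗ[ℂ] ℂ :=
    { toFun := fun v => conj (∫ k, (inner ℂ (v : E) (F k) : ℂ) ∂μ)
      map_add' := by
        intro u v
        simp only [Submodule.coe_add]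
        rw [← map_add]
        congr 1
        rw [← integral_add (hint u u.2) (hint v v.2)]
        congr 1; funext k; rw [inner_add_left]
      map_smul' := by
        intro c v
        simp only [Submodule.coe_smul, RingHom.id_apply]
        have h1 : (fun k => (inner ℂ (c • (v : E)) (F k) : ℂ))
            = fun k => conj c • (inner ℂ (v : E) (F k) : ℂ) := by
          funext k; rw [inner_smul_left]; rfl
        rw [h1, integral_smul, smul_eq_mul, map_mul, Complex.conj_conj, smul_eq_mul] }
  have hb : ∀ v : ↥sp, ‖ℓlin v‖ ≤ M * ‖v‖ := by
    intro v
    have h1 : ‖ℓlin v‖ = ‖∫ k, (inner ℂ (v : E) (F k) : ℂ) ∂μ‖ := norm_star _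
    rw [h1]
    calc ‖∫ k, (inner ℂ (v : E) (F k) : ℂ) ∂μ‖
        ≤ (M * ‖v‖) * (μ Set.univ).toReal := by
          refine norm_integral_le_of_norm_le_const (Filter.Eventually.of_forall fun k => ?_)
          calc ‖(inner ℂ (v : E) (F k) : ℂ)‖ ≤ ‖(v : E)‖ * ‖F k‖ := norm_inner_le_norm _ _
            _ ≤ ‖(v : E)‖ * M := by
                exact mul_le_mul_of_nonneg_left (hM k) (norm_nonneg _)
            _ = M * ‖v‖ := mul_comm _ _
      _ = M * ‖v‖ := by simp
  let ℓ : ↥sp →L[ℂ] ℂ := ℓlin.mkContinuous M hb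
  set Hc := sp.topologicalClosure with hHc
  haveI : CompleteSpace ↥Hc := sp.isClosed_topologicalClosure.completeSpace_coe
  let ι : ↥sp →ₗᵢ[ℂ] ↥Hc := ⟨Submodule.inclusion sp.le_topologicalClosure, fun v => rfl⟩
  let e : ↥sp →L[ℂ] ↥Hc := ι.toContinuousLinearMap
  have h_dense : DenseRange e := by
    refine Topology.IsInducing.subtypeVal.dense_iff.2 fun x => ?_
    have hx : (x : E) ∈ closure (sp : Set E) := by
      have := x.prop; rwa [hHc, ← Submodule.topologicalClosure_coe] at *
    convert hx using 2
    rw [← Set.range_comp]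
    exact Set.ext fun y => ⟨by rintro ⟨y, rfl⟩; exact y.prop, fun hy => ⟨⟨y, hy⟩, rfl⟩⟩
  have h_e : ∀ x : ↥sp, ‖x‖ ≤ (1 : ℝ≥0) * ‖e x‖ := fun x => by
    simp [e, ι.norm_map]
  let Λ := ℓ.extend e
  let w₀ : ↥Hc := (InnerProductSpace.toDual ℂ ↥Hc).symm Λ
  refine ⟨(w₀ : E), ?_, ?_⟩
  · have h1 : ‖(w₀ : E)‖ = ‖Λ‖ := by
      rw [show ‖(w₀ : E)‖ = ‖w₀‖ from rfl]
      exact LinearIsometryEquiv.norm_map _ _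
    rw [h1]
    calc ‖Λ‖ ≤ (1 : ℝ≥0) * ‖ℓ‖ := ContinuousLinearMap.opNorm_extend_le ℓ h_dense h_e
      _ = ‖ℓ‖ := by simp
      _ ≤ M := ℓlin.mkContinuous_norm_le hM0 hb
  · intro a ha
    set va : ↥sp := ⟨a, Submodule.subset_span ha⟩ with hva
    have h1 : Λ (e va) = ℓ va := ContinuousLinearMap.extend_eq ℓ h_dense (ContinuousLinearMap.isUniformEmbedding_of_bound e h_e).isUniformInducing va
    have h2 : (inner ℂ w₀ (e va) : ℂ) = Λ (e va) := InnerProductSpace.toDual_symm_apply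
    have h3 : (inner ℂ w₀ (e va) : ℂ) = (inner ℂ (w₀ : E) a : ℂ) := rfl
    have h4 : (inner ℂ (w₀ : E) a : ℂ) = conj (∫ k, (inner ℂ a (F k) : ℂ) ∂μ) := by
      rw [← h3, h2, h1]; rfl
    calc (inner ℂ a (w₀ : E) : ℂ) = conj (inner ℂ (w₀ : E) a : ℂ) := (inner_conj_symm _ _).symm
      _ = ∫ k, (inner ℂ a (F k) : ℂ) ∂μ := by rw [h4, Complex.conj_conj]

lemma eventually_dist_lt_of_compact_param {X Y : Type*} [TopologicalSpace X] [TopologicalSpace Y]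
    [CompactSpace Y] {f : X × Y → ℂ} (hf : Continuous f) (x : X)
    {ε : ℝ} (hε : 0 < ε) : ∀ᶠ y in 𝓝 x, ∀ k : Y, dist (f (y, k)) (f (x, k)) < ε := by
  have hcont : Continuous fun p : X × Y => dist (f p) (f (x, p.2)) :=
    hf.dist (hf.comp (continuous_const.prodMk continuous_snd))
  have hW : IsOpen {p : X × Y | dist (f p) (f (x, p.2)) < ε} :=
    isOpen_lt hcont continuous_const
  obtain ⟨u, v, hu, _, hxu, hvuniv, hsub⟩ := generalized_tube_lemma (s := {x}) (t := (Set.univ : Set Y)) isCompact_singleton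
    isCompact_univ hW (by
      rintro ⟨a, b⟩ ⟨ha, -⟩
      simp only [Set.mem_singleton_iff] at ha
      subst ha
      simpa using hε)
  filter_upwards [hu.mem_nhds (hxu rfl)] with y hy
  intro k
  exact hsub (Set.mk_mem_prod hy (hvuniv (Set.mem_univ k)))

lemma mdwa_quotient_of_mdwa {G : Type*} [Group G] [TopologicalSpace G]
    [IsTopologicalGroup G] [LocallyCompactSpace G] [T2Space G]
    (K : Subgroup G) [K.Normal] (hK : IsCompact (K : Set G))
    {d : ℕ} (hd : 1 ≤ d) {C : ℝ} (h : MdWeaklyAmenableWith G d C) :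
    MdWeaklyAmenableWith (G ⧸ K) d C := by
  obtain ⟨j, rfl⟩ : ∃ j, d = j + 1 := ⟨d - 1, (Nat.succ_pred_eq_of_pos hd).symm⟩
  haveI : IsClosed (K : Set G) := hK.isClosed
  letI : MeasurableSpace ↥K := borel ↥K
  haveI : BorelSpace ↥K := ⟨rfl⟩
  haveI : CompactSpace ↥K := isCompact_iff_compactSpace.mp hK
  haveI : Nonempty ↥K := ⟨1⟩
  haveI : Nonempty G := ⟨1⟩
  let K₀ : TopologicalSpace.PositiveCompacts ↥K :=
    ⟨⟨Set.univ, isCompact_univ⟩, by simpa using Set.univ_nonempty⟩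
  let μ : Measure ↥K := Measure.haarMeasure K₀
  haveI hμprob : IsProbabilityMeasure μ := ⟨Measure.haarMeasure_self (K₀ := K₀)⟩
  have hcsK : ∀ {β : Type} [NormedAddCommGroup β] (f : ↥K → β), HasCompactSupport f :=
    fun f => IsCompact.of_isClosed_subset isCompact_univ (isClosed_tsupport f) (Set.subset_univ _)
  intro Q hQ ε hε C' hC'
  obtain ⟨L, hL, hQL⟩ := exists_isCompact_image (QuotientGroup.isOpenMap_coe (N := K))
    QuotientGroup.mk_surjective hQ
  obtain ⟨φ, hφc, hφs, hφd, hφε⟩ := h (L * (K : Set G)) (hL.mul hK) (ε/2) (half_pos hε) C' hC'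
  set ψ : G → ℂ := fun x => ∫ k : ↥K, φ (x * ↑k) ∂μ with hψdef
  have hcontk : ∀ x : G, Continuous fun k : ↥K => φ (x * ↑k) :=
    fun x => hφc.comp (continuous_const.mul continuous_subtype_val)
  have hintk : ∀ x : G, Integrable (fun k : ↥K => φ (x * ↑k)) μ := fun x =>
    (hcontk x).integrable_of_hasCompactSupport (hcsK _)
  have hinv : ∀ (x : G) (k₀ : ↥K), ψ (x * ↑k₀) = ψ x := by
    intro x k₀
    have h1 := MeasureTheory.integral_mul_left_eq_self (μ := μ) (fun k : ↥K => φ (x * ↑k)) k₀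
    rw [hψdef]
    dsimp only
    rw [← h1]
    congr 1
    funext k
    rw [Subgroup.coe_mul, ← mul_assoc]
  set ψq : G ⧸ K → ℂ := fun q => ψ q.out with hψqdef
  have hmk : ∀ g : G, ψq (QuotientGroup.mk g) = ψ g := by
    intro g
    obtain ⟨k, hk⟩ := QuotientGroup.mk_out_eq_mul K g
    show ψ (QuotientGroup.mk g : G ⧸ K).out = ψ g
    rw [hk, hinv]
  have hψcont : Continuous ψ := by
    rw [continuous_iff_continuousAt]
    intro x
    rw [ContinuousAt, Metric.tendsto_nhds]
    intro ε' hε'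
    have hev := eventually_dist_lt_of_compact_param
      (f := fun p : G × ↥K => φ (p.1 * ↑p.2))
      (by fun_prop : Continuous fun p : G × ↥K => φ (p.1 * ↑p.2)) x
      (half_pos hε')
    filter_upwards [hev] with y hy
    rw [dist_eq_norm]
    have h2 : ψ y - ψ x = ∫ k : ↥K, (φ (y * ↑k) - φ (x * ↑k)) ∂μ := by
      rw [integral_sub (hintk y) (hintk x)]
    rw [h2]
    calc ‖∫ k : ↥K, (φ (y * ↑k) - φ (x * ↑k)) ∂μ‖ ≤ (ε' / 2) * (μ Set.univ).toReal := by
          refine norm_integral_le_of_norm_le_const (Filter.Eventually.of_forall fun k => ?_)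
          rw [← dist_eq_norm]
          exact (hy k).le
      _ = ε' / 2 := by simp
      _ < ε' := half_lt_self hε'
  have hψqcont : Continuous ψq := by
    rw [(QuotientGroup.isQuotientMap_mk K).continuous_iff]
    have : ψq ∘ QuotientGroup.mk = ψ := funext hmk
    rw [this]; exact hψcont
  have hψqsupp : HasCompactSupport ψq := by
    refine HasCompactSupport.intro ((hφs.mul hK).image continuous_quotient_mk') ?_
    intro q hq
    show ψ q.out = 0
    by_contra h0
    have h1 : ∃ k : ↥K, φ (q.out * ↑k) ≠ 0 := by
      by_contra hall
      push_neg at hall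
      apply h0
      show ∫ k : ↥K, φ (q.out * ↑k) ∂μ = 0
      simp only [hall, integral_zero]
    obtain ⟨k, hk⟩ := h1
    apply hq
    refine ⟨q.out, ?_, QuotientGroup.out_eq' q⟩
    have h2 : q.out * ↑k ∈ tsupport φ := subset_tsupport _ (Function.mem_support.2 hk)
    exact ⟨q.out * ↑k, h2, (↑k)⁻¹, K.inv_mem k.2, by group⟩
  obtain ⟨H, hN, hI, hCo, e₀, ed, ξ, M, hM, hprod, hMC⟩ := hφd
  letI : ∀ i, NormedAddCommGroup (H i) := hN
  letI : ∀ i, InnerProductSpace ℂ (H i) := hI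
  letI : ∀ i, CompleteSpace (H i) := hCo
  have hMj0 : 0 ≤ M j := le_trans (norm_nonneg _) (hM j (Nat.lt_succ_self j) 1)
  set s : G ⧸ K → G := Quotient.out with hsdef
  have hmks : ∀ q : G ⧸ K, (QuotientGroup.mk (s q) : G ⧸ K) = q := fun q => QuotientGroup.out_eq' q
  set A : (ℕ → G) → (H j →L[ℂ] H 0) := fun t => chainCLM (fun i => ξ i (t i)) j with hAdef
  set SS : Set (H j) := {a | ∃ t : ℕ → G, a = ContinuousLinearMap.adjoint (A t) (e₀ 1)} with hSSdef
  have hinner0 : ∀ y : H 0, (inner ℂ (e₀ 1) y : ℂ) = e₀.symm y := by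
    intro y
    conv_lhs => rw [← e₀.apply_symm_apply y]
    rw [LinearIsometryEquiv.inner_map_map]
    simp [RCLike.inner_apply]
  have hinnerA : ∀ (t : ℕ → G) (x : H j),
      (inner ℂ (ContinuousLinearMap.adjoint (A t) (e₀ 1)) x : ℂ) = e₀.symm (A t x) := by
    intro t x
    rw [ContinuousLinearMap.adjoint_inner_left, hinner0]
  have hchainA : ∀ (t u : ℕ → G), (∀ i, i < j → u i = t i) → ∀ v : H (j + 1),
      chainApply (fun i => ⇑(ξ i (u i))) (j + 1) v = A t (ξ j (u j) v) := by
    intro t u hu v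
    simp only [chainApply]
    rw [chainApply_congr (fun i => ⇑(ξ i (u i))) (fun i => ⇑(ξ i (t i))) j
      (fun i hi => by show ⇑(ξ i (u i)) = ⇑(ξ i (t i)); rw [hu i hi]) _]
    exact chainApply_eq_chainCLM _ j _
  have hphiA : ∀ (t : ℕ → G) (y : G),
      e₀.symm (A t (ξ j y (ed 1))) = φ (((List.range j).map t).prod * y) := by
    intro t y
    set u : ℕ → G := fun i => if i = j then y else t i with hu
    have h1 := hprod u
    have h2 : ((List.range (j + 1)).map u).prod = ((List.range j).map t).prod * y := by
      rw [List.prod_range_succ]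
      congr 1
      · congr 1
        refine List.map_congr_left fun i hi => ?_
        rw [List.mem_range] at hi
        simp [hu, Nat.ne_of_lt hi]
      · simp [hu]
    calc e₀.symm (A t (ξ j y (ed 1)))
        = e₀.symm (chainApply (fun i => ⇑(ξ i (u i))) (j + 1) (ed 1)) := by
          rw [hchainA t u (fun i hi => if_neg (Nat.ne_of_lt hi)) (ed 1)]
          have huj : u j = y := if_pos rfl
          rw [huj]
      _ = φ (((List.range (j + 1)).map u).prod) := h1.symm
      _ = φ (((List.range j).map t).prod * y) := by rw [h2]
  have hFbound : ∀ (q : G ⧸ K) (k : ↥K), ‖ξ j (s q * ↑k) (ed 1)‖ ≤ M j := by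
    intro q k
    calc ‖ξ j (s q * ↑k) (ed 1)‖ ≤ ‖ξ j (s q * ↑k)‖ * ‖ed 1‖ :=
          ContinuousLinearMap.le_opNorm _ _
      _ = ‖ξ j (s q * ↑k)‖ := by rw [ed.norm_map, norm_one, mul_one]
      _ ≤ M j := hM j (Nat.lt_succ_self j) _
  have hwex : ∀ q : G ⧸ K, ∃ w : H j, ‖w‖ ≤ M j ∧ ∀ a ∈ SS,
      (inner ℂ a w : ℂ) = ∫ k : ↥K, inner ℂ a (ξ j (s q * ↑k) (ed 1)) ∂μ := by
    intro q
    refine exists_weak_integral μ _ (hFbound q) hMj0 SS ?_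
    rintro a ⟨t, rfl⟩
    have heq : (fun k : ↥K => (inner ℂ (ContinuousLinearMap.adjoint (A t) (e₀ 1))
        (ξ j (s q * ↑k) (ed 1)) : ℂ))
        = fun k : ↥K => φ (((List.range j).map t).prod * (s q * ↑k)) := by
      funext k
      rw [hinnerA, hphiA]
    rw [heq]
    exact hφc.comp (continuous_const.mul (continuous_const.mul continuous_subtype_val))
  choose w hw1 hw2 using hwex
  have hkey : ∀ (t : ℕ → G) (q : G ⧸ K),
      e₀.symm (A t (w q)) = ψ (((List.range j).map t).prod * s q) := by
    intro t q
    rw [← hinnerA, hw2 q _ ⟨t, rfl⟩]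
    show _ = ∫ k : ↥K, φ ((((List.range j).map t).prod * s q) * ↑k) ∂μ
    congr 1
    funext k
    rw [hinnerA, hphiA, mul_assoc]
  set c₀ : H (j + 1) →L[ℂ] ℂ := ed.symm.toLinearIsometry.toContinuousLinearMap with hc₀
  have hc₀app : ∀ v, c₀ v = ed.symm v := fun v => rfl
  set T : (G ⧸ K) → (H (j + 1) →L[ℂ] H j) := fun q => c₀.smulRight (w q) with hTdef
  have hTed : ∀ q, T q (ed 1) = w q := by
    intro q
    rw [hTdef]
    dsimp only
    rw [ContinuousLinearMap.smulRight_apply, hc₀app, ed.symm_apply_apply, one_smul]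
  have hTnorm : ∀ q, ‖T q‖ ≤ M j := by
    intro q
    refine ContinuousLinearMap.opNorm_le_bound _ hMj0 fun v => ?_
    rw [hTdef]
    dsimp only
    rw [ContinuousLinearMap.smulRight_apply, norm_smul, hc₀app, ed.symm.norm_map, mul_comm]
    exact mul_le_mul_of_nonneg_right (hw1 q) (norm_nonneg v)
  set ξq : ∀ i, (G ⧸ K) → (H (i + 1) →L[ℂ] H i) := fun i q =>
    if h : i = j then cast (by rw [h]) (T q) else ξ i (s q) with hξqdef
  have hξqj : ∀ q, ξq j q = T q := by
    intro q
    rw [hξqdef]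
    dsimp only
    rw [dif_pos rfl, cast_eq]
  have hξqlt : ∀ i, i ≠ j → ∀ q, ξq i q = ξ i (s q) := by
    intro i hi q
    rw [hξqdef]
    dsimp only
    rw [dif_neg hi]
  refine ⟨ψq, hψqcont, hψqsupp, ?_, ?_⟩
  · refine ⟨H, hN, hI, hCo, e₀, ed, ξq, M, ?_, ?_, hMC⟩
    · intro i hi q
      by_cases hij : i = j
      · subst hij
        rw [hξqj]
        exact hTnorm q
      · rw [hξqlt i hij]
        exact hM i hi _
    · intro t
      have hmkprod : (QuotientGroup.mk (((List.range (j + 1)).map (fun i => s (t i))).prod)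
          : G ⧸ K) = ((List.range (j + 1)).map t).prod := by
        show (QuotientGroup.mk' K) (((List.range (j + 1)).map (fun i => s (t i))).prod) = _
        rw [map_list_prod (QuotientGroup.mk' K), List.map_map]
        congr 1
        exact List.map_congr_left fun i _ => hmks (t i)
      have hLHS : ψq (((List.range (j + 1)).map t).prod)
          = ψ (((List.range j).map (fun i => s (t i))).prod * s (t j)) := by
        rw [← hmkprod, hmk, List.prod_range_succ]
      rw [hLHS]
      have hRHS : e₀.symm (chainApply (fun i => ⇑(ξq i (t i))) (j + 1) (ed 1))
          = ψ (((List.range j).map (fun i => s (t i))).prod * s (t j)) := by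
        simp only [chainApply]
        beta_reduce
        rw [chainApply_congr (fun i => ⇑(ξq i (t i))) (fun i => ⇑(ξ i (s (t i)))) j
          (fun i hi => by show ⇑(ξq i (t i)) = ⇑(ξ i (s (t i))); rw [hξqlt i (Nat.ne_of_lt hi)]) _]
        rw [hξqj, hTed]
        rw [chainApply_eq_chainCLM (fun i => ξ i (s (t i))) j (w (t j))]
        exact hkey (fun i => s (t i)) (t j)
      rw [hRHS]
  · intro x hx
    obtain ⟨l, hl, rfl⟩ := hQL hx
    rw [hmk]
    have h2 : ψ l - 1 = ∫ k : ↥K, (φ (l * ↑k) - 1) ∂μ := by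
      rw [integral_sub (hintk l) (integrable_const _), integral_const]
      simp
      rfl
    rw [h2]
    calc ‖∫ k : ↥K, (φ (l * ↑k) - 1) ∂μ‖ ≤ (ε / 2) * (μ Set.univ).toReal := by
          refine norm_integral_le_of_norm_le_const (Filter.Eventually.of_forall fun k => ?_)
          exact (hφε _ ⟨l, hl, ↑k, k.2, rfl⟩).le
      _ = ε / 2 := by simp
      _ < ε := half_lt_self hε

lemma mdwa_of_mdwa_quotient {G : Type*} [Group G] [TopologicalSpace G]
    [IsTopologicalGroup G] [LocallyCompactSpace G] [T2Space G]
    (K : Subgroup G) [K.Normal] (hK : IsCompact (K : Set G))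
    {d : ℕ} {C : ℝ} (h : MdWeaklyAmenableWith (G ⧸ K) d C) :
    MdWeaklyAmenableWith G d C := by
  intro Q hQ ε hε C' hC'
  obtain ⟨φ', hφ'c, hφ's, hφ'd, hφ'ε⟩ :=
    h (QuotientGroup.mk '' Q) (hQ.image continuous_quotient_mk') ε hε C' hC'
  obtain ⟨L, hL, hLsub⟩ := exists_isCompact_image (QuotientGroup.isOpenMap_coe (N := K))
    QuotientGroup.mk_surjective (hφ's.isCompact.of_isClosed_subset (isClosed_tsupport φ')
      (Set.Subset.refl _))
  refine ⟨φ' ∘ QuotientGroup.mk, hφ'c.comp continuous_quotient_mk', ?_, ?_, ?_⟩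
  · refine HasCompactSupport.intro (hL.mul hK) ?_
    intro x hx
    by_contra h0
    have hx' : (QuotientGroup.mk x : G ⧸ K) ∈ tsupport φ' :=
      subset_tsupport _ (Function.mem_support.2 h0)
    obtain ⟨l, hl, hlx⟩ := hLsub hx'
    have hk : l⁻¹ * x ∈ K := QuotientGroup.eq.mp hlx
    exact hx ⟨l, hl, l⁻¹ * x, hk, mul_inv_cancel_left l x⟩
  · obtain ⟨H, hN, hI, hCo, e₀, ed, ξ, M, hM, hprod, hMC⟩ := hφ'd
    refine ⟨H, hN, hI, hCo, e₀, ed, fun i t => ξ i (QuotientGroup.mk t), M,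
      fun i hi t => hM i hi _, ?_, hMC⟩
    intro t
    have h1 := hprod (fun i => QuotientGroup.mk (t i))
    rw [← h1]
    show φ' (QuotientGroup.mk' K (((List.range d).map t).prod)) = _
    rw [map_list_prod (QuotientGroup.mk' K), List.map_map]
    rfl
  · intro x hx
    exact hφ'ε _ ⟨x, hx, rfl⟩

/-- if `K` is a compact normal subgroup of a locally compact Hausdorff
group `G` and `G` is `M_d`-weakly amenable with constant at most `C`, then so is `G/K`;
in particular `Λ(G/K, d) ≤ Λ(G, d)`, and combined with the converse direction,
`Λ(G, d) = Λ(G/K, d)`. -/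

theorem mdWeaklyAmenable_quotient (G : Type*) [Group G] [TopologicalSpace G]
    [IsTopologicalGroup G] [LocallyCompactSpace G] [T2Space G]
    (K : Subgroup G) [K.Normal] (hK : IsCompact (K : Set G))
    (d : ℕ) (hd : 2 ≤ d) (C : ℝ) (hC : 1 ≤ C)
    (h : MdWeaklyAmenableWith G d C) :
    MdWeaklyAmenableWith (G ⧸ K) d C ∧
    LambdaConst (G ⧸ K) d ≤ LambdaConst G d ∧
    LambdaConst G d = LambdaConst (G ⧸ K) d := by
  have hd1 : 1 ≤ d := le_trans (by norm_num) hd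
  refine ⟨mdwa_quotient_of_mdwa K hK hd1 h, ?_, ?_⟩
  · apply sInf_le_sInf
    rintro x ⟨C'', h1, h2, h3⟩
    exact ⟨C'', h1, h2, mdwa_quotient_of_mdwa K hK hd1 h3⟩
  · apply le_antisymm
    · apply sInf_le_sInf
      rintro x ⟨C'', h1, h2, h3⟩
      exact ⟨C'', h1, h2, mdwa_of_mdwa_quotient K hK h3⟩
    · apply sInf_le_sInf
      rintro x ⟨C'', h1, h2, h3⟩
      exact ⟨C'', h1, h2, mdwa_quotient_of_mdwa K hK hd1 h3⟩
end
end
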